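/- arXiv:1703.09636 — 7 statements merged into one kernel-verified Lean document; each statement's English description precedes it below -/
import Mathlib

section
/- Let Γ and G be finite groups of the same order. Let e'(G,Γ) be the number of regular subgroups of the holomorph Hol(G) = G ⋊ Aut(G) (acting on G) that are isomorphic to Γ, and let e(G,Γ) be the number of regular subgroups of Perm(Γ) that are isomorphic to G and normalized by the left-translation subgroup λ(Γ). Then e(G,Γ) = (|Aut(Γ)| / |Aut(G)|) · e'(G,Γ). -/
/-- A subgroup `N ≤ Perm Γ` is regular: its action on `Γ` is transitive and
the stabiliser of every point is trivial. -/
def IsRegularSubgroup (Γ : Type*) [Group Γ] (N : Subgroup (Equiv.Perm Γ)) : Prop :=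
  (∀ x y : Γ, ∃ ν ∈ N, ν x = y) ∧ ∀ ν ∈ N, ∀ x : Γ, ν x = x → ν = 1

/-- A subgroup `N ≤ Perm Γ` is normalised by the subgroup `λ(Γ)` of left translations. -/
def IsNormalizedByLeftTranslations (Γ : Type*) [Group Γ] (N : Subgroup (Equiv.Perm Γ)) : Prop :=
  ∀ γ : Γ, ∀ ν ∈ N, Equiv.mulLeft γ * ν * (Equiv.mulLeft γ)⁻¹ ∈ N

/-- The holomorph `Hol(G) = G ⋊ Aut(G)`. -/
abbrev Hol (G : Type*) [Group G] : Type _ :=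
  SemidirectProduct G (MulAut G) (MonoidHom.id (MulAut G))

/-- A subgroup `C ≤ Hol(G)` is regular for the action `[α,ψ]·β = α·ψ(β)` of
`Hol(G)` on `G`: transitive with trivial point stabilisers. -/
def IsRegularHolSubgroup (G : Type*) [Group G] (C : Subgroup (Hol G)) : Prop :=
  (∀ x y : G, ∃ h ∈ C, h.left * h.right x = y) ∧
    ∀ h ∈ C, ∀ x : G, h.left * h.right x = x → h = 1

/-! Multiplying each count by the automorphism group of the abstract group turns it into a count
of embeddings. A regular embedding `β : G → Perm Γ` is the left regular representation `λ` of `G`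
transported along its orbit bijection `b : G ≃ Γ`, `b 1 = 1`, and `λ(Γ)` normalises `β(G)` exactly
when `b⁻¹ λ(Γ) b` normalises `λ(G)`, i.e. lies in the image of `Hol G`. Since a regular embedding
`Γ → Perm G` is in turn determined by its orbit bijection, `b ↦ b⁻¹` matches the embeddings counted
by `e(G,Γ) |Aut G|` with those counted by `e'(G,Γ) |Aut Γ|`. -/

open Equiv Function MulAction

section Embeddings
variable (H K : Type*) [Group H] [Group K]

noncomputable def embeddingsWithRangeEquiv (N : Subgroup K) :
    {f : H →* K // Injective f ∧ f.range = N} ≃ (H ≃* N) where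
  toFun f := (MonoidHom.ofInjective f.2.1).trans (MulEquiv.subgroupCongr f.2.2)
  invFun e := ⟨N.subtype.comp e.toMonoidHom, N.subtype_injective.comp e.injective, by
    rw [MonoidHom.range_comp, MonoidHom.range_eq_top_of_surjective _ e.surjective,
      ← MonoidHom.range_eq_map, Subgroup.range_subtype]⟩
  left_inv f := by ext; simp [MonoidHom.ofInjective_apply]
  right_inv e := by ext; rfl

theorem card_embeddings_eq_mul_card_mulAut (Q : Subgroup K → Prop) :
    Nat.card {f : H →* K // Injective f ∧ Q f.range} =
      Nat.card {N : Subgroup K // Nonempty (N ≃* H) ∧ Q N} * Nat.card (MulAut H) := by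
  let range (f : {f : H →* K // Injective f ∧ Q f.range}) :
      {N : Subgroup K // Nonempty (N ≃* H) ∧ Q N} :=
    ⟨f.1.range, ⟨(MonoidHom.ofInjective f.2.1).symm⟩, f.2.2⟩
  have fiber (N : {N : Subgroup K // Nonempty (N ≃* H) ∧ Q N}) :
      {f // range f = N} ≃ MulAut H :=
    calc {f // range f = N}
      _ ≃ {f : H →* K // Injective f ∧ f.range = N} :=
        (subtypeEquivRight fun _ => Subtype.ext_iff).trans <|
          (subtypeSubtypeEquivSubtypeInter _ (fun f : H →* K => f.range = N.1)).trans <|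
          subtypeEquivRight fun f : H →* K =>
            ⟨fun h => ⟨h.1.1, h.2⟩, fun h => ⟨⟨h.1, h.2 ▸ N.2.2⟩, h.2⟩⟩
      _ ≃ (H ≃* N) := embeddingsWithRangeEquiv H K N
      _ ≃ MulAut H :=
        { toFun a := a.trans N.2.1.some
          invFun m := m.trans N.2.1.some.symm
          left_inv a := by ext; simp
          right_inv m := by ext; simp }
  rw [← Nat.card_prod]
  exact Nat.card_congr ((sigmaFiberEquiv range).symm.trans (sigmaEquivProdOfEquiv fiber))

end Embeddings

section RegularEmbedding
variable {H X : Type*} [Group H]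

def conjLeftRegular (o : H ≃ X) : H →* Perm X :=
  o.permCongrHom.toMonoidHom.comp (toPermHom H H)

@[simp] lemma conjLeftRegular_apply (o : H ≃ X) (h : H) (x : X) :
    conjLeftRegular o h x = o (h * o.symm x) := rfl

lemma mem_range_conjLeftRegular_iff (o : H ≃ X) (ν : Perm X) :
    ν ∈ (conjLeftRegular o).range ↔ o.symm.permCongr ν ∈ (toPermHom H H).range := by
  rw [conjLeftRegular, MonoidHom.range_comp, Subgroup.mem_map_equiv, permCongrHom_symm,
    permCongrHom_coe]

lemma conjLeftRegular_injective (o : H ≃ X) : Injective (conjLeftRegular o) := by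
  intro h h' hh
  simpa using congrArg (fun ν : Perm X => o.symm (ν (o 1))) hh

lemma isRegularSubgroup_range_conjLeftRegular [Group X] (o : H ≃ X) :
    IsRegularSubgroup X (conjLeftRegular o).range := by
  refine ⟨fun x y => ⟨_, ⟨o.symm y * (o.symm x)⁻¹, rfl⟩, by
    rw [conjLeftRegular_apply, inv_mul_cancel_right, apply_symm_apply]⟩, ?_⟩
  rintro _ ⟨h, rfl⟩ x hx
  rw [conjLeftRegular_apply, ← eq_symm_apply, mul_eq_right] at hx
  rw [hx, map_one]

variable [Group X] (f : H →* Perm X) (hf : Injective f) (hreg : IsRegularSubgroup X f.range)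

noncomputable def orbitEquiv : H ≃ X :=
  Equiv.ofBijective (fun h => f h 1) ⟨fun h h' hh => by
    have : f (h'⁻¹ * h) 1 = 1 := by simp [Perm.mul_apply, hh]
    simpa [inv_mul_eq_one, eq_comm] using hf ((hreg.2 _ ⟨_, rfl⟩ 1 this).trans f.map_one.symm),
    fun x => by
      obtain ⟨_, ⟨h, rfl⟩, hx⟩ := hreg.1 1 x
      exact ⟨h, hx⟩⟩

lemma orbitEquiv_apply (h : H) : orbitEquiv f hf hreg h = f h 1 := rfl

lemma conjLeftRegular_orbitEquiv : conjLeftRegular (orbitEquiv f hf hreg) = f := by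
  ext h x
  obtain ⟨y, rfl⟩ := (orbitEquiv f hf hreg).surjective x
  rw [conjLeftRegular_apply, symm_apply_apply, orbitEquiv_apply, orbitEquiv_apply, map_mul,
    Perm.mul_apply]

lemma orbitEquiv_conjLeftRegular (o : H ≃ X) (ho : o 1 = 1) :
    orbitEquiv (conjLeftRegular o) (conjLeftRegular_injective o)
      (isRegularSubgroup_range_conjLeftRegular o) = o := by
  ext h
  simp [orbitEquiv_apply, ← ho]

noncomputable def regularEmbeddingEquiv (P : Subgroup (Perm X) → Prop) :
    {f : H →* Perm X // Injective f ∧ IsRegularSubgroup X f.range ∧ P f.range} ≃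
      {o : H ≃ X // o 1 = 1 ∧ P (conjLeftRegular o).range} where
  toFun f := ⟨orbitEquiv f.1 f.2.1 f.2.2.1, by simp [orbitEquiv_apply],
    by rw [conjLeftRegular_orbitEquiv]; exact f.2.2.2⟩
  invFun o := ⟨conjLeftRegular o.1, conjLeftRegular_injective o.1,
    isRegularSubgroup_range_conjLeftRegular o.1, o.2.2⟩
  left_inv f := Subtype.ext (conjLeftRegular_orbitEquiv f.1 f.2.1 f.2.2.1)
  right_inv o := Subtype.ext (orbitEquiv_conjLeftRegular o.1 o.2.1)

end RegularEmbedding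

namespace Hol
variable (G : Type*) [Group G]

def toPerm : Hol G →* Perm G :=
  SemidirectProduct.lift (toPermHom G G) (MulAut.toPerm G) fun ψ => by
    ext g x
    change ψ g * x = ψ (g * ψ.symm x)
    simp

variable {G}

@[simp] lemma toPerm_apply (h : Hol G) (x : G) : toPerm G h x = h.left * h.right x := rfl

lemma toPerm_injective : Injective (toPerm G) := by
  rw [injective_iff_map_eq_one]
  intro h hh
  have hx (x : G) : h.left * h.right x = x := by rw [← toPerm_apply, hh, Perm.one_apply]
  have hleft : h.left = 1 := by simpa using hx 1
  refine SemidirectProduct.ext hleft (MulEquiv.ext fun x => ?_)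
  simpa [hleft] using hx x

lemma mem_range_toPerm_iff (π : Perm G) : π ∈ (toPerm G).range ↔
    ∀ g, π * toPermHom G G g * π⁻¹ ∈ (toPermHom G G).range := by
  constructor
  · rintro ⟨h, rfl⟩ g
    refine ⟨h.left * h.right g * h.left⁻¹, Perm.ext fun x => ?_⟩
    obtain ⟨y, rfl⟩ := (toPerm G h).surjective x
    rw [Perm.mul_apply, Perm.mul_apply, Perm.inv_def, symm_apply_apply]
    simp [mul_assoc]
  · intro hπ
    have hmul (g y : G) : π (g * y) = π g * (π 1)⁻¹ * π y := by
      obtain ⟨c, hc⟩ := hπ g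
      have hc' (z : G) : π (g * z) = c * π z := by
        simpa [Perm.mul_apply] using (congrArg (· (π z)) hc).symm
      have hc1 := hc' 1
      rw [mul_one] at hc1
      rw [hc', hc1, mul_inv_cancel_right]
    let ψ : MulAut G := MulEquiv.mk' (π.trans (Equiv.mulLeft (π 1)⁻¹)) fun x y => by
      simp [hmul x y, mul_assoc]
    exact ⟨⟨π 1, ψ⟩, Perm.ext fun x => mul_inv_cancel_left (π 1) (π x)⟩

lemma isRegularHolSubgroup_iff (C : Subgroup (Hol G)) :
    IsRegularHolSubgroup G C ↔ IsRegularSubgroup G (C.map (toPerm G)) := by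
  simp [IsRegularHolSubgroup, IsRegularSubgroup, map_eq_one_iff _ toPerm_injective]

variable (G) in
noncomputable def regularSubgroupEquiv (Γ : Type*) [Group Γ] :
    {C : Subgroup (Hol G) // Nonempty (C ≃* Γ) ∧ IsRegularHolSubgroup G C} ≃
      {N : Subgroup (Perm G) //
        Nonempty (N ≃* Γ) ∧ IsRegularSubgroup G N ∧ N ≤ (toPerm G).range} where
  toFun C := ⟨C.1.map (toPerm G),
    ⟨(C.1.equivMapOfInjective _ toPerm_injective).symm.trans C.2.1.some⟩,
    (isRegularHolSubgroup_iff C.1).1 C.2.2, Subgroup.map_le_range _ _⟩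
  invFun N :=
    have hN : (N.1.comap (toPerm G)).map (toPerm G) = N.1 := Subgroup.map_comap_eq_self N.2.2.2
    ⟨N.1.comap (toPerm G),
      ⟨((Subgroup.equivMapOfInjective _ _ toPerm_injective).trans
        (MulEquiv.subgroupCongr hN)).trans N.2.1.some⟩,
      (isRegularHolSubgroup_iff _).2 (by rw [hN]; exact N.2.2.1)⟩
  left_inv C := Subtype.ext (Subgroup.comap_map_eq_self_of_injective toPerm_injective C.1)
  right_inv N := Subtype.ext (Subgroup.map_comap_eq_self N.2.2.2)

end Hol

/-- Conjugation by `o⁻¹` turns `λ(Γ)` normalising `o λ(G) o⁻¹` into `o⁻¹ λ(Γ) o`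
normalising `λ(G)`. -/
lemma isNormalizedByLeftTranslations_range_conjLeftRegular_iff {Γ G : Type*} [Group Γ]
    [Group G] (o : G ≃ Γ) :
    IsNormalizedByLeftTranslations Γ (conjLeftRegular o).range ↔
      (conjLeftRegular o.symm).range ≤ (Hol.toPerm G).range := by
  have conj (γ : Γ) (g : G) :
      o.symm.permCongr (Equiv.mulLeft γ * conjLeftRegular o g * (Equiv.mulLeft γ)⁻¹) =
        conjLeftRegular o.symm γ * toPermHom G G g * (conjLeftRegular o.symm γ)⁻¹ := by
    have hg : o.symm.permCongr (conjLeftRegular o g) = toPermHom G G g := by ext; simp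
    rw [← permCongrHom_coe, map_mul, map_mul, map_inv, permCongrHom_coe, hg]
    rfl
  simp only [IsNormalizedByLeftTranslations, SetLike.le_def, MonoidHom.mem_range,
    forall_exists_index, forall_apply_eq_imp_iff]
  simp only [← MonoidHom.mem_range, mem_range_conjLeftRegular_iff, conj, Hol.mem_range_toPerm_iff]

theorem count_hgs_via_holomorph_general (Γ G : Type) [Group Γ] [Group G] [Finite G] :
    (Nat.card {N : Subgroup (Equiv.Perm Γ) //
        Nonempty (N ≃* G) ∧ IsRegularSubgroup Γ N ∧ IsNormalizedByLeftTranslations Γ N} : ℚ) =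
      (Nat.card (MulAut Γ) : ℚ) / (Nat.card (MulAut G) : ℚ) *
        (Nat.card {C : Subgroup (Hol G) //
          Nonempty (C ≃* Γ) ∧ IsRegularHolSubgroup G C} : ℚ) := by
  have key : Nat.card {N : Subgroup (Perm Γ) //
        Nonempty (N ≃* G) ∧ IsRegularSubgroup Γ N ∧ IsNormalizedByLeftTranslations Γ N} *
        Nat.card (MulAut G) =
      Nat.card {C : Subgroup (Hol G) // Nonempty (C ≃* Γ) ∧ IsRegularHolSubgroup G C} *
        Nat.card (MulAut Γ) :=
    calc _ = Nat.card {β : G →* Perm Γ // Injective β ∧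
          IsRegularSubgroup Γ β.range ∧ IsNormalizedByLeftTranslations Γ β.range} :=
          (card_embeddings_eq_mul_card_mulAut G (Perm Γ) _).symm
      _ = Nat.card {θ : Γ →* Perm G // Injective θ ∧
          IsRegularSubgroup G θ.range ∧ θ.range ≤ (Hol.toPerm G).range} :=
        Nat.card_congr <| (regularEmbeddingEquiv (IsNormalizedByLeftTranslations Γ)).trans <|
          (subtypeEquiv (symmEquiv G Γ) fun o => and_congr (o.symm_apply_eq.trans eq_comm).symm
            (isNormalizedByLeftTranslations_range_conjLeftRegular_iff o)).trans
          (regularEmbeddingEquiv (· ≤ (Hol.toPerm G).range)).symm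
      _ = _ := by
        rw [card_embeddings_eq_mul_card_mulAut Γ (Perm G)
          fun N => IsRegularSubgroup G N ∧ N ≤ (Hol.toPerm G).range,
          Nat.card_congr (Hol.regularSubgroupEquiv G Γ)]
  have : (Nat.card (MulAut G) : ℚ) ≠ 0 := Nat.cast_ne_zero.2 Nat.card_pos.ne'
  field_simp
  exact_mod_cast key.trans (mul_comm _ _)

/-- **Lemma (Byott).** For finite groups `Γ`, `G` of the same order, the number
`e(G,Γ)` of regular subgroups of `Perm Γ` isomorphic to `G` and normalised by the left
translations equals `(|Aut Γ| / |Aut G|) · e'(G,Γ)`, where `e'(G,Γ)` is the number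
of regular subgroups of `Hol(G)` isomorphic to `Γ`. -/
theorem count_hgs_via_holomorph (Γ G : Type) [Group Γ] [Group G] [Finite Γ] [Finite G]
    (hcard : Nat.card Γ = Nat.card G) :
    (Nat.card {N : Subgroup (Equiv.Perm Γ) //
        Nonempty (N ≃* G) ∧ IsRegularSubgroup Γ N ∧ IsNormalizedByLeftTranslations Γ N} : ℚ) =
      (Nat.card (MulAut Γ) : ℚ) / (Nat.card (MulAut G) : ℚ) *
        (Nat.card {C : Subgroup (Hol G) //
          Nonempty (C ≃* Γ) ∧ IsRegularHolSubgroup G C} : ℚ) :=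
  count_hgs_via_holomorph_general Γ G
end

section
/- Let n = d·e = d'·e' be squarefree with gcd(d,e) = 1 = gcd(d',e'), and let k have multiplicative order d modulo e and k' have multiplicative order d' modulo e'. Then the groups G(d,e,k) and G(d',e',k') are isomorphic if and only if d = d', e = e', and k and k' generate the same cyclic subgroup of the unit group U(e) of Z/eZ. -/
/-!
Every element of `G(d,e,k)` is `σ ^ a * τ ^ c`, and `⟨σ⟩ ∩ ⟨τ⟩ = 1` since the orders are coprime.
For a prime `p ∣ e` all solutions of `x ^ p = 1` therefore lie in the cyclic group `⟨σ⟩`, so there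
are at most `p` of them, while for a prime `p ∣ d` the group `⟨τ ^ (d / p)⟩` together with its
conjugate by `σ` gives more than `p`. So an isomorphism type determines the primes dividing `e`,
hence `e` (squarefree) and `d`. An isomorphism `f` maps `⟨σ⟩` onto `⟨σ'⟩`, and
`f τ = σ' ^ b * τ' ^ c` acts on it as raising to the power `k' ^ c`, so `k ∈ ⟨k'⟩`. Conversely, if
`k = k' ^ b` then `σ', τ' ^ b` satisfy the relations of `G(d,e,k)`; the group presented by these
relations has order at most `e * d`, so it is isomorphic to each of its quotients of order `e * d`,
such as `G` and `G'`.
-/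

section NormalForm

variable {G : Type*} [Group G] {σ τ : G} {k : ℕ}

theorem pow_mul_pow_mul_inv_pow (hrel : τ * σ * τ⁻¹ = σ ^ k) (c a : ℕ) :
    τ ^ c * σ ^ a * (τ ^ c)⁻¹ = σ ^ (k ^ c * a) := by
  induction c with
  | zero => simp
  | succ c ih =>
    calc τ ^ (c + 1) * σ ^ a * (τ ^ (c + 1))⁻¹ = τ * (τ ^ c * σ ^ a * (τ ^ c)⁻¹) * τ⁻¹ := by
          group
      _ = σ ^ (k ^ (c + 1) * a) := by
          rw [ih, ← conj_pow, hrel, ← pow_mul, pow_succ']; ring_nf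

theorem pow_mul_pow_comm (hrel : τ * σ * τ⁻¹ = σ ^ k) (c a : ℕ) :
    τ ^ c * σ ^ a = σ ^ (k ^ c * a) * τ ^ c := by
  rw [← pow_mul_pow_mul_inv_pow hrel, inv_mul_cancel_right]

theorem exists_eq_pow_mul_pow (hσ : IsOfFinOrder σ) (hτ : IsOfFinOrder τ)
    (hrel : τ * σ * τ⁻¹ = σ ^ k) (hgen : Subgroup.closure {σ, τ} = ⊤) (x : G) :
    ∃ a c : ℕ, x = σ ^ a * τ ^ c := by
  have hx : x ∈ (Subgroup.closure {σ, τ}).toSubmonoid := by simp [hgen]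
  rw [Subgroup.closure_toSubmonoid_of_isOfFinOrder (by simp [hσ, hτ])] at hx
  induction hx using Submonoid.closure_induction_left with
  | one => exact ⟨0, 0, by simp⟩
  | mul_left g hg y _ ih =>
    obtain ⟨a, c, rfl⟩ := ih
    rcases hg with rfl | rfl
    · exact ⟨a + 1, c, by rw [pow_succ', mul_assoc]⟩
    · exact ⟨k * a, c + 1, by
        rw [← mul_assoc, ← pow_one g, pow_mul_pow_comm hrel, pow_one, pow_one, mul_assoc,
          ← pow_succ']⟩

theorem surjective_pow_mul_pow (hσ : IsOfFinOrder σ) (hτ : IsOfFinOrder τ)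
    (hrel : τ * σ * τ⁻¹ = σ ^ k) (hgen : Subgroup.closure {σ, τ} = ⊤) :
    Function.Surjective
      fun p : Fin (orderOf σ) × Fin (orderOf τ) ↦ σ ^ (p.1 : ℕ) * τ ^ (p.2 : ℕ) := by
  intro x
  obtain ⟨a, c, rfl⟩ := exists_eq_pow_mul_pow hσ hτ hrel hgen x
  exact ⟨(⟨a % orderOf σ, Nat.mod_lt _ hσ.orderOf_pos⟩,
    ⟨c % orderOf τ, Nat.mod_lt _ hτ.orderOf_pos⟩), by simp only [pow_mod_orderOf]⟩

theorem finite_of_closure_eq_top (hσ : IsOfFinOrder σ) (hτ : IsOfFinOrder τ)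
    (hrel : τ * σ * τ⁻¹ = σ ^ k) (hgen : Subgroup.closure {σ, τ} = ⊤) : Finite G :=
  Finite.of_surjective _ (surjective_pow_mul_pow hσ hτ hrel hgen)

theorem card_le_orderOf_mul_orderOf (hσ : IsOfFinOrder σ) (hτ : IsOfFinOrder τ)
    (hrel : τ * σ * τ⁻¹ = σ ^ k) (hgen : Subgroup.closure {σ, τ} = ⊤) :
    Nat.card G ≤ orderOf σ * orderOf τ := by
  simpa using Nat.card_le_card_of_surjective _ (surjective_pow_mul_pow hσ hτ hrel hgen)

theorem exists_pow_mul_pow_pow_eq (hrel : τ * σ * τ⁻¹ = σ ^ k) (a c m : ℕ) :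
    ∃ b : ℕ, (σ ^ a * τ ^ c) ^ m = σ ^ b * τ ^ (c * m) := by
  induction m with
  | zero => exact ⟨0, by simp⟩
  | succ m ih =>
    obtain ⟨b, hb⟩ := ih
    refine ⟨b + k ^ (c * m) * a, ?_⟩
    rw [pow_succ, hb, mul_assoc, ← mul_assoc (τ ^ (c * m)), pow_mul_pow_comm hrel, pow_add,
      Nat.mul_succ, pow_add]
    group

end NormalForm

section CoprimeOrders

variable {G : Type*} [Group G] {σ τ : G} {k : ℕ}

theorem eq_one_of_mem_zpowers_of_mem_zpowers (hcop : (orderOf σ).Coprime (orderOf τ)) {x : G}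
    (hxσ : x ∈ Subgroup.zpowers σ) (hxτ : x ∈ Subgroup.zpowers τ) : x = 1 :=
  orderOf_eq_one_iff.mp <| Nat.eq_one_of_dvd_coprimes hcop (orderOf_dvd_of_mem_zpowers hxσ)
    (orderOf_dvd_of_mem_zpowers hxτ)

variable [Finite G]

theorem mem_powers_of_pow_eq_one (hrel : τ * σ * τ⁻¹ = σ ^ k)
    (hgen : Subgroup.closure {σ, τ} = ⊤) (hcop : (orderOf σ).Coprime (orderOf τ)) {m : ℕ}
    (hm : (orderOf τ).Coprime m) {x : G} (hx : x ^ m = 1) : x ∈ Submonoid.powers σ := by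
  obtain ⟨a, c, rfl⟩ :=
    exists_eq_pow_mul_pow (isOfFinOrder_of_finite σ) (isOfFinOrder_of_finite τ) hrel hgen x
  obtain ⟨b, hb⟩ := exists_pow_mul_pow_pow_eq hrel a c m
  have hcm : τ ^ (c * m) = 1 := by
    refine eq_one_of_mem_zpowers_of_mem_zpowers hcop ?_ (Subgroup.npow_mem_zpowers τ _)
    rw [hb] at hx
    rw [eq_inv_of_mul_eq_one_right hx]
    exact inv_mem (Subgroup.npow_mem_zpowers σ b)
  have hc : τ ^ c = 1 :=
    orderOf_dvd_iff_pow_eq_one.mp (hm.dvd_of_dvd_mul_right (orderOf_dvd_of_pow_eq_one hcm))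
  rw [hc, mul_one]
  exact ⟨a, rfl⟩

theorem card_pow_eq_one_le (hrel : τ * σ * τ⁻¹ = σ ^ k) (hgen : Subgroup.closure {σ, τ} = ⊤)
    (hcop : (orderOf σ).Coprime (orderOf τ)) {m : ℕ} (hm : (orderOf τ).Coprime m) (hm0 : 0 < m) :
    Nat.card {x : G // x ^ m = 1} ≤ m := by
  classical
  have := Fintype.ofFinite (Subgroup.zpowers σ)
  let toZpowers (x : {x : G // x ^ m = 1}) : {y : Subgroup.zpowers σ // y ^ m = 1} :=
    ⟨⟨x, (isOfFinOrder_of_finite σ).mem_powers_iff_mem_zpowers.mp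
      (mem_powers_of_pow_eq_one hrel hgen hcop hm x.2)⟩, Subtype.ext x.2⟩
  calc Nat.card {x : G // x ^ m = 1}
      ≤ Nat.card {y : Subgroup.zpowers σ // y ^ m = 1} :=
        Nat.card_le_card_of_injective toZpowers fun x y h ↦ Subtype.ext (congrArg (·.1.1) h)
    _ ≤ m := by
        rw [Nat.card_eq_fintype_card, Fintype.card_subtype]
        exact IsCyclic.card_pow_eq_one_le hm0

/-- The conjugate `σ τ^c σ⁻¹` is a further solution of `x ^ orderOf (τ ^ c) = 1` outside
`⟨τ ^ c⟩`: modulo `τ ^ c` it equals `σ ^ (1 - k ^ c) ∈ ⟨σ⟩`, and `⟨σ⟩ ∩ ⟨τ⟩ = 1`. -/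
theorem orderOf_pow_lt_card_pow_eq_one (hrel : τ * σ * τ⁻¹ = σ ^ k)
    (hcop : (orderOf σ).Coprime (orderOf τ)) {c : ℕ} (hc : σ ^ k ^ c ≠ σ) :
    orderOf (τ ^ c) < Nat.card {x : G // x ^ orderOf (τ ^ c) = 1} := by
  have hconj : σ * τ ^ c * σ⁻¹ ∉ Subgroup.zpowers (τ ^ c) := by
    intro hmem
    have hcomm : σ * τ ^ c * σ⁻¹ * (τ ^ c)⁻¹ = σ * (σ ^ k ^ c)⁻¹ := by
      rw [← mul_one (k ^ c), ← pow_mul_pow_mul_inv_pow hrel, pow_one]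
      group
    have hτ : σ * τ ^ c * σ⁻¹ * (τ ^ c)⁻¹ ∈ Subgroup.zpowers τ :=
      Subgroup.zpowers_le.mpr (Subgroup.npow_mem_zpowers τ c)
        (mul_mem hmem (inv_mem (Subgroup.mem_zpowers _)))
    have hσ : σ * τ ^ c * σ⁻¹ * (τ ^ c)⁻¹ ∈ Subgroup.zpowers σ :=
      hcomm ▸ mul_mem (Subgroup.mem_zpowers σ) (inv_mem (Subgroup.npow_mem_zpowers σ _))
    exact hc (mul_inv_eq_one.mp (hcomm ▸ eq_one_of_mem_zpowers_of_mem_zpowers hcop hσ hτ)).symm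
  have hsub : insert (σ * τ ^ c * σ⁻¹) (Subgroup.zpowers (τ ^ c) : Set G) ⊆
      {x | x ^ orderOf (τ ^ c) = 1} := by
    rintro x (rfl | hx)
    · simp [conj_pow, pow_orderOf_eq_one]
    · exact orderOf_dvd_iff_pow_eq_one.mp (orderOf_dvd_of_mem_zpowers hx)
  calc orderOf (τ ^ c) < (insert (σ * τ ^ c * σ⁻¹) (Subgroup.zpowers (τ ^ c) : Set G)).ncard := by
        rw [Set.ncard_insert_of_notMem hconj, ← Nat.card_coe_set_eq, SetLike.coe_sort_coe,
          Nat.card_zpowers]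
        exact Nat.lt_succ_self _
    _ ≤ Nat.card {x : G // x ^ orderOf (τ ^ c) = 1} := Set.ncard_le_ncard hsub

theorem prime_lt_card_pow_eq_one (hrel : τ * σ * τ⁻¹ = σ ^ k)
    (hcop : (orderOf σ).Coprime (orderOf τ)) (hk : orderOf (k : ZMod (orderOf σ)) = orderOf τ)
    {p : ℕ} (hp : p.Prime) (hpτ : p ∣ orderOf τ) :
    p < Nat.card {x : G // x ^ p = 1} := by
  have hτ0 := (orderOf_pos τ).ne'
  have hc : σ ^ k ^ (orderOf τ / p) ≠ σ := by
    intro h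
    rw [← pow_one σ, pow_right_comm, pow_one, pow_eq_pow_iff_modEq,
      ← ZMod.natCast_eq_natCast_iff, Nat.cast_pow, Nat.cast_one, ← orderOf_dvd_iff_pow_eq_one,
      hk] at h
    exact (Nat.div_lt_self (orderOf_pos τ) hp.one_lt).not_ge
      (Nat.le_of_dvd (Nat.div_pos (Nat.le_of_dvd (orderOf_pos τ) hpτ) hp.pos) h)
  simpa only [orderOf_pow_orderOf_div hτ0 hpτ] using orderOf_pow_lt_card_pow_eq_one hrel hcop hc

end CoprimeOrders

def gdekRels (d e k : ℕ) : Set (FreeGroup (Fin 2)) :=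
  {.of 0 ^ e, .of 1 ^ d, .of 1 * .of 0 * (.of 1)⁻¹ * (.of 0 ^ k)⁻¹}

abbrev Gdek (d e k : ℕ) := PresentedGroup (gdekRels d e k)

namespace Gdek

variable {d e k : ℕ}

theorem lift_rels_eq_one {G : Type*} [Group G] {σ τ : G} (hσ : σ ^ e = 1) (hτ : τ ^ d = 1)
    (hrel : τ * σ * τ⁻¹ = σ ^ k) : ∀ r ∈ gdekRels d e k, FreeGroup.lift ![σ, τ] r = 1 := by
  rintro r (rfl | rfl | rfl) <;> simp [hσ, hτ, hrel]

theorem of_zero_pow : (PresentedGroup.of 0 : Gdek d e k) ^ e = 1 :=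
  PresentedGroup.one_of_mem (rels := gdekRels d e k) (x := .of 0 ^ e) (by simp [gdekRels])

theorem of_one_pow : (PresentedGroup.of 1 : Gdek d e k) ^ d = 1 :=
  PresentedGroup.one_of_mem (rels := gdekRels d e k) (x := .of 1 ^ d) (by simp [gdekRels])

theorem of_one_mul_of_zero_mul_inv :
    (PresentedGroup.of 1 * PresentedGroup.of 0 * (PresentedGroup.of 1)⁻¹ : Gdek d e k) =
      PresentedGroup.of 0 ^ k :=
  mul_inv_eq_one.mp <| PresentedGroup.one_of_mem (rels := gdekRels d e k) (by simp [gdekRels])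

theorem closure_of_eq_top :
    Subgroup.closure {PresentedGroup.of 0, PresentedGroup.of 1} = (⊤ : Subgroup (Gdek d e k)) := by
  rw [← PresentedGroup.closure_range_of]
  congr 1
  ext x
  simp [Fin.exists_fin_two, eq_comm]

theorem isOfFinOrder_of_zero (he : e ≠ 0) : IsOfFinOrder (PresentedGroup.of 0 : Gdek d e k) :=
  isOfFinOrder_iff_pow_eq_one.mpr ⟨e, Nat.pos_of_ne_zero he, of_zero_pow⟩

theorem isOfFinOrder_of_one (hd : d ≠ 0) : IsOfFinOrder (PresentedGroup.of 1 : Gdek d e k) :=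
  isOfFinOrder_iff_pow_eq_one.mpr ⟨d, Nat.pos_of_ne_zero hd, of_one_pow⟩

theorem finite (hd : d ≠ 0) (he : e ≠ 0) : Finite (Gdek d e k) :=
  finite_of_closure_eq_top (isOfFinOrder_of_zero he) (isOfFinOrder_of_one hd)
    of_one_mul_of_zero_mul_inv closure_of_eq_top

theorem card_le (hd : d ≠ 0) (he : e ≠ 0) : Nat.card (Gdek d e k) ≤ e * d :=
  (card_le_orderOf_mul_orderOf (isOfFinOrder_of_zero he) (isOfFinOrder_of_one hd)
    of_one_mul_of_zero_mul_inv closure_of_eq_top).trans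
    (Nat.mul_le_mul (orderOf_le_of_pow_eq_one (Nat.pos_of_ne_zero he) of_zero_pow)
      (orderOf_le_of_pow_eq_one (Nat.pos_of_ne_zero hd) of_one_pow))

theorem nonempty_mulEquiv {G : Type*} [Group G] [Finite G] {σ τ : G} (hσ : orderOf σ = e)
    (hτ : orderOf τ = d) (hcop : d.Coprime e) (hrel : τ * σ * τ⁻¹ = σ ^ k)
    (hcard : Nat.card G = e * d) : Nonempty (Gdek d e k ≃* G) := by
  have hd : d ≠ 0 := hτ ▸ (orderOf_pos τ).ne'
  have he : e ≠ 0 := hσ ▸ (orderOf_pos σ).ne'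
  let φ := PresentedGroup.toGroup
    (lift_rels_eq_one (hσ ▸ pow_orderOf_eq_one σ) (hτ ▸ pow_orderOf_eq_one τ) hrel)
  have hσφ : σ ∈ φ.range := ⟨.of 0, by simp [φ]⟩
  have hτφ : τ ∈ φ.range := ⟨.of 1, by simp [φ]⟩
  have hrange : φ.range = ⊤ := by
    refine Subgroup.eq_top_of_card_eq _ (le_antisymm (Subgroup.card_le_card_group _) ?_)
    rw [hcard]
    exact Nat.le_of_dvd Nat.card_pos <| Nat.Coprime.mul_dvd_of_dvd_of_dvd hcop.symm
      (hσ ▸ φ.range.orderOf_dvd_natCard hσφ) (hτ ▸ φ.range.orderOf_dvd_natCard hτφ)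
  have := finite (k := k) hd he
  exact ⟨MulEquiv.ofBijective φ
    ((MonoidHom.range_eq_top.mp hrange).bijective_of_nat_card_le (hcard ▸ card_le hd he))⟩

end Gdek

theorem card_pow_eq_one_congr {G G' : Type*} [Group G] [Group G'] (f : G ≃* G') (m : ℕ) :
    Nat.card {x : G // x ^ m = 1} = Nat.card {y : G' // y ^ m = 1} :=
  Nat.card_congr (f.toEquiv.subtypeEquiv fun x ↦ by simp [← map_pow])

structure IsGdekGenerators {G : Type*} [Group G] (σ τ : G) (d e k : ℕ) : Prop where
  orderOf_fst : orderOf σ = e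
  orderOf_snd : orderOf τ = d
  coprime : d.Coprime e
  orderOf_natCast : orderOf (k : ZMod e) = d
  conj_eq : τ * σ * τ⁻¹ = σ ^ k
  closure_eq_top : Subgroup.closure {σ, τ} = ⊤

namespace IsGdekGenerators

variable {G G' : Type*} [Group G] [Group G'] {σ τ : G} {σ' τ' : G'} {d e k d' e' k' : ℕ}

theorem finite (h : IsGdekGenerators σ τ d e k) (hd : d ≠ 0) (he : e ≠ 0) : Finite G :=
  finite_of_closure_eq_top (orderOf_pos_iff.mp (Nat.pos_of_ne_zero (h.orderOf_fst ▸ he)))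
    (orderOf_pos_iff.mp (Nat.pos_of_ne_zero (h.orderOf_snd ▸ hd))) h.conj_eq h.closure_eq_top

theorem coprime_orderOf (h : IsGdekGenerators σ τ d e k) : (orderOf σ).Coprime (orderOf τ) := by
  rw [h.orderOf_fst, h.orderOf_snd]
  exact h.coprime.symm

variable [Finite G] [Finite G']

theorem card_eq (h : IsGdekGenerators σ τ d e k) : Nat.card G = e * d := by
  refine le_antisymm ?_ (Nat.le_of_dvd Nat.card_pos ?_)
  · simpa only [h.orderOf_fst, h.orderOf_snd] using card_le_orderOf_mul_orderOf
      (isOfFinOrder_of_finite σ) (isOfFinOrder_of_finite τ) h.conj_eq h.closure_eq_top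
  · exact Nat.Coprime.mul_dvd_of_dvd_of_dvd h.coprime.symm (h.orderOf_fst ▸ orderOf_dvd_natCard σ)
      (h.orderOf_snd ▸ orderOf_dvd_natCard τ)

theorem dvd_of_mulEquiv (h : IsGdekGenerators σ τ d e k) (h' : IsGdekGenerators σ' τ' d' e' k')
    (f : G ≃* G') (hn : d * e = d' * e') {p : ℕ} (hp : p.Prime) (hpe : p ∣ e) : p ∣ e' := by
  by_contra hpe'
  have hpd' : p ∣ d' := (hp.dvd_mul.mp (hn ▸ dvd_mul_of_dvd_right hpe d)).resolve_right hpe'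
  have hle := card_pow_eq_one_le h.conj_eq h.closure_eq_top h.coprime_orderOf
    (h.orderOf_snd ▸ h.coprime.coprime_dvd_right hpe) hp.pos
  have hlt := prime_lt_card_pow_eq_one h'.conj_eq h'.coprime_orderOf
    (by rw [h'.orderOf_fst, h'.orderOf_snd, h'.orderOf_natCast]) hp (h'.orderOf_snd ▸ hpd')
  rw [card_pow_eq_one_congr f] at hle
  omega

theorem natCast_mem_powers_of_mulEquiv (h : IsGdekGenerators σ τ d e k)
    (h' : IsGdekGenerators σ' τ' d e k') (f : G ≃* G') :
    (k : ZMod e) ∈ Submonoid.powers (k' : ZMod e) := by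
  obtain ⟨j, hj : σ ^ j = f.symm σ'⟩ : f.symm σ' ∈ Submonoid.powers σ :=
    mem_powers_of_pow_eq_one h.conj_eq h.closure_eq_top h.coprime_orderOf
      (h.orderOf_snd ▸ h.coprime)
      (by rw [← map_pow, ← h'.orderOf_fst, pow_orderOf_eq_one, map_one])
  obtain ⟨b, c, hfτ⟩ := exists_eq_pow_mul_pow (isOfFinOrder_of_finite σ')
    (isOfFinOrder_of_finite τ') h'.conj_eq h'.closure_eq_top (f τ)
  have hconj : σ' ^ k' ^ c = σ' ^ k :=
    calc σ' ^ k' ^ c = f τ * σ' * (f τ)⁻¹ := by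
          have := pow_mul_pow_mul_inv_pow h'.conj_eq c 1
          rw [pow_one, mul_one] at this
          rw [hfτ, show σ' ^ b * τ' ^ c * σ' * (σ' ^ b * τ' ^ c)⁻¹ =
            σ' ^ b * (τ' ^ c * σ' * (τ' ^ c)⁻¹) * (σ' ^ b)⁻¹ by group, this]
          group
      _ = f ((σ ^ j) ^ k) := by
          rw [← pow_mul, mul_comm, pow_mul, ← h.conj_eq, conj_pow, hj]
          simp
      _ = σ' ^ k := by rw [hj, map_pow, MulEquiv.apply_symm_apply]
  rw [pow_eq_pow_iff_modEq, h'.orderOf_fst, ← ZMod.natCast_eq_natCast_iff, Nat.cast_pow] at hconj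
  exact ⟨c, hconj⟩

theorem nonempty_mulEquiv_of_powers_eq (h : IsGdekGenerators σ τ d e k)
    (h' : IsGdekGenerators σ' τ' d e k')
    (hpow : Submonoid.powers (k : ZMod e) = Submonoid.powers (k' : ZMod e)) :
    Nonempty (G ≃* G') := by
  obtain ⟨b, hb : (k' : ZMod e) ^ b = k⟩ : (k : ZMod e) ∈ Submonoid.powers (k' : ZMod e) :=
    hpow ▸ Submonoid.mem_powers _
  have hk' : IsOfFinOrder (k' : ZMod e) :=
    orderOf_pos_iff.mp (h'.orderOf_natCast ▸ (h'.orderOf_snd ▸ orderOf_pos τ'))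
  have hτb : orderOf (τ' ^ b) = d := by
    rw [(isOfFinOrder_of_finite τ').orderOf_pow, h'.orderOf_snd, ← h'.orderOf_natCast,
      ← hk'.orderOf_pow, hb, h.orderOf_natCast, h'.orderOf_natCast]
  have hrel : τ' ^ b * σ' * (τ' ^ b)⁻¹ = σ' ^ k := by
    have := pow_mul_pow_mul_inv_pow h'.conj_eq b 1
    rw [pow_one, mul_one] at this
    rw [this, pow_eq_pow_iff_modEq, h'.orderOf_fst, ← ZMod.natCast_eq_natCast_iff, Nat.cast_pow,
      hb]
  obtain ⟨f⟩ := Gdek.nonempty_mulEquiv h.orderOf_fst h.orderOf_snd h.coprime h.conj_eq h.card_eq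
  obtain ⟨f'⟩ := Gdek.nonempty_mulEquiv h'.orderOf_fst hτb h.coprime hrel h'.card_eq
  exact ⟨f.symm.trans f'⟩

end IsGdekGenerators

/-- **Lemma (isomorphism criterion for groups of squarefree order).** Let
`n = d·e = d'·e'` be squarefree, with `gcd(d,e) = gcd(d',e') = 1`, `k` of order `d`
mod `e` and `k'` of order `d'` mod `e'`. Then `G(d,e,k) ≅ G(d',e',k')` if and only if
`d = d'`, `e = e'` and `k`, `k'` generate the same cyclic subgroup of `U(e)`.
Here `G` (resp. `G'`) is a group realising `G(d,e,k)` (resp. `G(d',e',k')`) via generators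
`σ, τ` (resp. `σ', τ'`) satisfying the defining presentation. -/
theorem Gdek_iso_iff (n d e k d' e' k' : ℕ) (hn : Squarefree n)
    (hde : n = d * e) (hde' : n = d' * e')
    (hcop : Nat.Coprime d e) (hcop' : Nat.Coprime d' e')
    (hord : orderOf (k : ZMod e) = d) (hord' : orderOf (k' : ZMod e') = d')
    (G G' : Type) [Group G] [Group G']
    (σ τ : G) (hσ : orderOf σ = e) (hτ : orderOf τ = d)
    (hrel : τ * σ * τ⁻¹ = σ ^ k) (hgen : Subgroup.closure {σ, τ} = ⊤)
    (σ' τ' : G') (hσ' : orderOf σ' = e') (hτ' : orderOf τ' = d')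
    (hrel' : τ' * σ' * τ'⁻¹ = σ' ^ k') (hgen' : Subgroup.closure {σ', τ'} = ⊤) :
    Nonempty (G ≃* G') ↔
      d = d' ∧ e = e' ∧
        Submonoid.powers ((k : ZMod e)) = Submonoid.powers ((k' : ZMod e)) := by
  have h : IsGdekGenerators σ τ d e k := ⟨hσ, hτ, hcop, hord, hrel, hgen⟩
  have h' : IsGdekGenerators σ' τ' d' e' k' := ⟨hσ', hτ', hcop', hord', hrel', hgen'⟩
  have hde0 : d * e ≠ 0 := hde ▸ hn.ne_zero
  have hde0' : d' * e' ≠ 0 := hde' ▸ hn.ne_zero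
  have := h.finite (left_ne_zero_of_mul hde0) (right_ne_zero_of_mul hde0)
  have := h'.finite (left_ne_zero_of_mul hde0') (right_ne_zero_of_mul hde0')
  constructor
  · rintro ⟨f⟩
    obtain rfl : e = e' := (Nat.Squarefree.ext_iff (hn.squarefree_of_dvd (hde ▸ dvd_mul_left e d))
      (hn.squarefree_of_dvd (hde' ▸ dvd_mul_left e' d'))).mpr fun p hp ↦
        ⟨h.dvd_of_mulEquiv h' f (hde ▸ hde') hp, h'.dvd_of_mulEquiv h f.symm (hde' ▸ hde) hp⟩
    obtain rfl : d = d' := Nat.eq_of_mul_eq_mul_right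
      (Nat.pos_of_ne_zero (right_ne_zero_of_mul hde0)) (hde ▸ hde')
    exact ⟨rfl, rfl, le_antisymm (Submonoid.powers_le.mpr (h.natCast_mem_powers_of_mulEquiv h' f))
      (Submonoid.powers_le.mpr (h'.natCast_mem_powers_of_mulEquiv h f.symm))⟩
  · rintro ⟨rfl, rfl, hpow⟩
    exact h.nonempty_mulEquiv_of_powers_eq h' hpow
end

section
/- Let G = G(d,e,k) be a group of squarefree order n, with generators σ of order e and τ of order d satisfying τστ⁻¹ = σ^k. Let z = gcd(e, k−1) and g = e/z. Then the centre Z(G) is the cyclic subgroup ⟨σ^g⟩ of order z, and the commutator subgroup G' is the cyclic subgroup ⟨σ^z⟩ of order g. -/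
/-!
Since `⟨σ⟩` is normal, every element is `σ ^ a * τ ^ b`. Such an element commutes with `σ` only if
`k ^ b ≡ 1 [MOD e]`, i.e. `d ∣ b`, i.e. `τ ^ b = 1`; and `σ ^ a` commutes with `τ` iff
`(σ ^ (k - 1)) ^ a = 1`. So `Z(G) = ⟨σ ^ g⟩` with `g = orderOf (σ ^ (k - 1)) = e / z`. The commutator
`⁅τ, σ⁆ = σ ^ (k - 1)` generates a normal subgroup modulo which the generators commute, so
`G' = ⟨σ ^ (k - 1)⟩ = ⟨σ ^ z⟩`.
-/

open Subgroup
open scoped commutatorElement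

section Generators

variable {G : Type*} [Group G] {a b : G}

theorem Subgroup.mem_center_iff_of_closure_pair_eq_top (hgen : closure {a, b} = ⊤) {x : G} :
    x ∈ center G ↔ Commute a x ∧ Commute b x := by
  simp only [center_eq_iInf hgen, mem_iInf, Set.mem_insert_iff, Set.mem_singleton_iff,
    forall_eq_or_imp, forall_eq, mem_centralizer_singleton_iff, eq_comm (a := x * _)]
  rfl

theorem isMulCommutative_of_closure_pair_eq_top (hgen : closure {a, b} = ⊤) (hab : Commute a b) :
    IsMulCommutative G := by
  rw [← center_eq_top_iff, eq_top_iff, ← hgen, closure_le, Set.insert_subset_iff,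
    Set.singleton_subset_iff, SetLike.mem_coe, SetLike.mem_coe,
    mem_center_iff_of_closure_pair_eq_top hgen, mem_center_iff_of_closure_pair_eq_top hgen]
  exact ⟨⟨Commute.refl a, hab.symm⟩, hab, Commute.refl b⟩

end Generators

theorem zpowers_pow_eq_zpowers_pow_gcd {G : Type*} [Group G] (x : G) (n : ℕ) :
    zpowers (x ^ n) = zpowers (x ^ (orderOf x).gcd n) := by
  apply le_antisymm <;> rw [zpowers_le]
  · obtain ⟨c, hc⟩ := Nat.gcd_dvd_right (orderOf x) n
    exact ⟨c, by simp only [zpow_natCast, ← pow_mul, ← hc]⟩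
  · refine ⟨Nat.gcdB (orderOf x) n, ?_⟩
    calc (x ^ n) ^ Nat.gcdB (orderOf x) n
        = (x ^ orderOf x) ^ Nat.gcdA (orderOf x) n * (x ^ n) ^ Nat.gcdB (orderOf x) n := by
          rw [pow_orderOf_eq_one, one_zpow, one_mul]
      _ = x ^ (orderOf x).gcd n := by
          rw [← zpow_natCast x ((orderOf x).gcd n), Nat.gcd_eq_gcd_ab, zpow_add, zpow_mul,
            zpow_mul, zpow_natCast, zpow_natCast]

section Metacyclic

variable {G : Type*} [Group G] {σ τ : G} {k : ℕ}

theorem pow_mul_pow_eq_of_conj_eq (hrel : τ * σ * τ⁻¹ = σ ^ k) (m n : ℕ) :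
    τ ^ m * σ ^ n = σ ^ (n * k ^ m) * τ ^ m := by
  have hconj (n : ℕ) : τ * σ ^ n = σ ^ (k * n) * τ := by
    rw [pow_mul, ← hrel, conj_pow]
    group
  induction m with
  | zero => simp
  | succ m ih =>
    rw [pow_succ', mul_assoc, ih, ← mul_assoc, hconj, mul_assoc, pow_succ']
    ring_nf

theorem normal_zpowers_pow_of_conj_eq (hσ : IsOfFinOrder σ) (hgen : closure {σ, τ} = ⊤)
    (hrel : τ * σ * τ⁻¹ = σ ^ k) (n : ℕ) : (zpowers (σ ^ n)).Normal := by
  have : Finite (zpowers (σ ^ n) : Set G) := hσ.pow.finite_zpowers.to_subtype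
  rw [← normalizer_eq_top_iff, eq_top_iff, ← hgen, closure_le, Set.insert_subset_iff,
    Set.singleton_subset_iff]
  constructor <;> apply mem_normalizer_fintype <;> rintro _ ⟨i, rfl⟩
  · rw [((Commute.self_pow σ n).zpow_right i).eq, mul_inv_cancel_right]
    exact ⟨i, rfl⟩
  · refine ⟨k * i, ?_⟩
    show (σ ^ n) ^ ((k : ℤ) * i) = _
    rw [← conj_zpow, ← conj_pow, hrel, zpow_mul, zpow_natCast, ← pow_mul, ← pow_mul, mul_comm]

theorem exists_pow_mul_pow_eq_of_conj_eq (hσ : IsOfFinOrder σ) (hτ : IsOfFinOrder τ)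
    (hgen : closure {σ, τ} = ⊤) (hrel : τ * σ * τ⁻¹ = σ ^ k) (x : G) :
    ∃ a b : ℕ, σ ^ a * τ ^ b = x := by
  have hnormal := normal_zpowers_pow_of_conj_eq hσ hgen hrel 1
  rw [pow_one] at hnormal
  have hx : x ∈ zpowers σ ⊔ zpowers τ := by
    rw [zpowers_eq_closure, zpowers_eq_closure, ← Subgroup.closure_union, ← Set.insert_eq, hgen]
    trivial
  obtain ⟨_, hy, _, hz, rfl⟩ := mem_sup_of_normal_left.mp hx
  obtain ⟨a, rfl⟩ := hσ.mem_powers_iff_mem_zpowers.2 hy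
  obtain ⟨b, rfl⟩ := hτ.mem_powers_iff_mem_zpowers.2 hz
  exact ⟨a, b, rfl⟩

theorem pow_eq_one_of_commute_of_conj_eq (hrel : τ * σ * τ⁻¹ = σ ^ k)
    (hord : orderOf (k : ZMod (orderOf σ)) = orderOf τ) {b : ℕ} (hb : Commute (τ ^ b) σ) :
    τ ^ b = 1 := by
  have hfix : σ ^ k ^ b = σ ^ 1 := by
    have := pow_mul_pow_eq_of_conj_eq hrel b 1
    rw [one_mul, pow_one, hb.eq] at this
    rw [pow_one]
    exact (mul_right_cancel this).symm
  rw [pow_eq_pow_iff_modEq, ← ZMod.natCast_eq_natCast_iff, Nat.cast_pow, Nat.cast_one] at hfix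
  rw [← orderOf_dvd_iff_pow_eq_one, ← hord]
  exact orderOf_dvd_of_pow_eq_one hfix

theorem commute_pow_iff_of_conj_eq (hrel : τ * σ * τ⁻¹ = σ ^ k) (hk : 0 < k) (a : ℕ) :
    Commute τ (σ ^ a) ↔ (σ ^ (k - 1)) ^ a = 1 := by
  have hconj := pow_mul_pow_eq_of_conj_eq hrel 1 a
  have hsplit : σ ^ (a * k) = (σ ^ (k - 1)) ^ a * σ ^ a := by
    rw [← pow_mul, ← pow_add]
    obtain ⟨j, rfl⟩ := Nat.exists_eq_add_one_of_ne_zero hk.ne'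
    congr 1
    simp only [Nat.add_sub_cancel]
    ring
  rw [pow_one, pow_one] at hconj
  rw [Commute, SemiconjBy, hconj, mul_left_inj, hsplit, mul_eq_right]

theorem center_eq_zpowers_of_conj_eq (hσ : IsOfFinOrder σ) (hτ : IsOfFinOrder τ)
    (hgen : closure {σ, τ} = ⊤) (hrel : τ * σ * τ⁻¹ = σ ^ k) (hk : 0 < k)
    (hord : orderOf (k : ZMod (orderOf σ)) = orderOf τ) :
    center G = zpowers (σ ^ orderOf (σ ^ (k - 1))) := by
  apply le_antisymm
  · intro x hx
    obtain ⟨a, b, rfl⟩ := exists_pow_mul_pow_eq_of_conj_eq hσ hτ hgen hrel x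
    rw [mem_center_iff_of_closure_pair_eq_top hgen] at hx
    have hb : τ ^ b = 1 := by
      refine pow_eq_one_of_commute_of_conj_eq hrel hord (Commute.symm ?_)
      simpa using ((Commute.self_pow σ a).inv_right).mul_right hx.1
    rw [hb, mul_one] at hx ⊢
    obtain ⟨c, hc⟩ := orderOf_dvd_of_pow_eq_one ((commute_pow_iff_of_conj_eq hrel hk a).1 hx.2)
    exact ⟨c, by simp only [zpow_natCast, ← pow_mul, ← hc]⟩
  · rw [zpowers_le, mem_center_iff_of_closure_pair_eq_top hgen]
    exact ⟨Commute.self_pow σ _, (commute_pow_iff_of_conj_eq hrel hk _).2 (pow_orderOf_eq_one _)⟩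

theorem commutator_eq_zpowers_of_conj_eq (hσ : IsOfFinOrder σ) (hgen : closure {σ, τ} = ⊤)
    (hrel : τ * σ * τ⁻¹ = σ ^ k) (hk : 0 < k) : commutator G = zpowers (σ ^ (k - 1)) := by
  have hcomm : ⁅τ, σ⁆ = σ ^ (k - 1) := by
    obtain ⟨j, rfl⟩ := Nat.exists_eq_add_one_of_ne_zero hk.ne'
    rw [commutatorElement_def, hrel, Nat.add_sub_cancel, pow_succ, mul_inv_cancel_right]
  have hnormal := normal_zpowers_pow_of_conj_eq hσ hgen hrel (k - 1)
  apply le_antisymm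
  · rw [← Normal.quotient_commutative_iff_commutator_le]
    refine isMulCommutative_of_closure_pair_eq_top (a := (σ : G ⧸ zpowers (σ ^ (k - 1))))
      (b := τ) ?_ (Commute.symm ?_)
    · have hmap := MonoidHom.map_closure (QuotientGroup.mk' (zpowers (σ ^ (k - 1)))) {σ, τ}
      rw [hgen, map_top_of_surjective _ (QuotientGroup.mk'_surjective _), Set.image_pair] at hmap
      exact hmap.symm
    · have hkill : ((⁅τ, σ⁆ : G) : G ⧸ zpowers (σ ^ (k - 1))) = 1 :=
        (QuotientGroup.eq_one_iff _).2 (hcomm ▸ mem_zpowers _)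
      exact commutatorElement_eq_one_iff_commute.1 (by simpa [commutatorElement_def] using hkill)
  · rw [zpowers_le, ← hcomm]
    exact commutator_mem_commutator (mem_top τ) (mem_top σ)

end Metacyclic

theorem centre_and_commutator_general (d e k : ℕ) (hd : 0 < d) (he : 0 < e) (hk : 0 < k)
    (hord : orderOf (k : ZMod e) = d)
    (G : Type) [Group G] (σ τ : G)
    (hσ : orderOf σ = e) (hτ : orderOf τ = d)
    (hrel : τ * σ * τ⁻¹ = σ ^ k) (hgen : Subgroup.closure {σ, τ} = ⊤)
    (z g : ℕ) (hz : z = Nat.gcd e (k - 1)) (hg : g = e / z) :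
    Subgroup.center G = Subgroup.zpowers (σ ^ g) ∧
      Nat.card (Subgroup.center G) = z ∧
      commutator G = Subgroup.zpowers (σ ^ z) ∧
      Nat.card (commutator G) = g := by
  have hσfin : IsOfFinOrder σ := orderOf_pos_iff.1 (hσ ▸ he)
  have hτfin : IsOfFinOrder τ := orderOf_pos_iff.1 (hτ ▸ hd)
  subst hσ hτ hz hg
  have hgcd : (orderOf σ).gcd (k - 1) ≠ 0 := (Nat.gcd_pos_of_pos_left _ he).ne'
  have hcentre := center_eq_zpowers_of_conj_eq hσfin hτfin hgen hrel hk hord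
  rw [hσfin.orderOf_pow] at hcentre
  have hcomm := commutator_eq_zpowers_of_conj_eq hσfin hgen hrel hk
  rw [zpowers_pow_eq_zpowers_pow_gcd] at hcomm
  refine ⟨hcentre, ?_, hcomm, ?_⟩
  · rw [hcentre, Nat.card_zpowers, orderOf_pow_orderOf_div he.ne' (Nat.gcd_dvd_left _ _)]
  · rw [hcomm, Nat.card_zpowers, orderOf_pow_of_dvd hgcd (Nat.gcd_dvd_left _ _)]

/-- **Proposition (centre and commutator subgroup of `G(d,e,k)`).** Let
`G = G(d,e,k)` be of squarefree order `n = d·e`, realised via generators `σ, τ` with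
`orderOf σ = e`, `orderOf τ = d`, `τστ⁻¹ = σ^k`. With `z = gcd(e, k-1)` and `g = e/z`,
the centre of `G` is the cyclic subgroup `⟨σ^g⟩`, of order `z`, and the commutator
subgroup of `G` is the cyclic subgroup `⟨σ^z⟩`, of order `g`. -/
theorem centre_and_commutator (d e k : ℕ) (hd : 0 < d) (he : 0 < e) (hk : 0 < k)
    (hcop : Nat.Coprime d e) (hord : orderOf (k : ZMod e) = d)
    (hsf : Squarefree (d * e))
    (G : Type) [Group G] (σ τ : G)
    (hσ : orderOf σ = e) (hτ : orderOf τ = d)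
    (hrel : τ * σ * τ⁻¹ = σ ^ k) (hgen : Subgroup.closure {σ, τ} = ⊤)
    (z g : ℕ) (hz : z = Nat.gcd e (k - 1)) (hg : g = e / z) :
    Subgroup.center G = Subgroup.zpowers (σ ^ g) ∧
      Nat.card (Subgroup.center G) = z ∧
      commutator G = Subgroup.zpowers (σ ^ z) ∧
      Nat.card (commutator G) = g :=
  centre_and_commutator_general d e k hd he hk hord G σ τ hσ hτ hrel hgen z g hz hg
end

section
/- Let G = G(d,e,k) be a group of squarefree order, with z = gcd(e,k−1), g = e/z, and let θ and φ_s (for s ∈ U(e)) be the automorphisms of G determined by θ(σ) = σ, θ(τ) = σ^z τ and φ_s(σ) = σ^s, φ_s(τ) = τ. Let x = [σ^a τ, θ^c φ_s] ∈ Hol(G) = G ⋊ Aut(G). Then for every j ≥ 0, x^j = [σ^{A(j)} τ^j, θ^{c·S(s,j)} φ_{s^j}], where A(j) = a·S(sk,j) + c·z·k·T(k,s,j), S(h,j) = ∑_{i=0}^{j−1} h^i, and T(k,s,j) = ∑_{h=0}^{j−1} S(s,h)·k^{h−1} for j ≥ 1 with T(k,s,0) = 0. -/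
/-- `S(h,j) = ∑_{i=0}^{j-1} h^i` (so `S(h,0) = 0`). -/
def Ssum (h : ℕ) (j : ℕ) : ℕ := ∑ i ∈ Finset.range j, h ^ i

/-- `T(k,s,j) = ∑_{h=0}^{j-1} S(s,h)·k^{h-1}` (so `T(k,s,0) = T(k,s,1) = 0`; the term
`h = 0` vanishes since `S(s,0) = 0`, so truncated subtraction in the exponent is harmless). -/
def Tsum (k s : ℕ) (j : ℕ) : ℕ := ∑ h ∈ Finset.range j, Ssum s h * k ^ (h - 1)

lemma Ssum_succ (h j : ℕ) : Ssum h (j + 1) = Ssum h j + h ^ j :=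
  Finset.sum_range_succ _ _

lemma mul_Tsum_succ (k s j : ℕ) : k * Tsum k s (j + 1) = k * Tsum k s j + Ssum s j * k ^ j := by
  rw [Tsum, Finset.sum_range_succ, ← Tsum]
  cases j with
  | zero => simp [Ssum]
  | succ j => rw [Nat.add_sub_cancel, pow_succ]; ring

section Monoid

variable {M : Type*} [Monoid M] {a b : M} {s : ℕ}

theorem pow_mul_pow_eq_pow_mul_pow (h : b * a = a ^ s * b) (j n : ℕ) :
    b ^ j * a ^ n = a ^ (s ^ j * n) * b ^ j := by
  have hb (n : ℕ) : b * a ^ n = a ^ (s * n) * b := by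
    rw [pow_mul]; exact SemiconjBy.pow_right h n
  induction j generalizing n with
  | zero => simp
  | succ j ih => rw [pow_succ, mul_assoc, hb, ← mul_assoc, ih, mul_assoc, pow_succ, mul_assoc]

theorem pow_mul_pow_eq_pow_Ssum_mul_pow (h : b * a = a ^ s * b) (c j : ℕ) :
    (a ^ c * b) ^ j = a ^ (c * Ssum s j) * b ^ j := by
  induction j with
  | zero => simp [Ssum]
  | succ j ih =>
    rw [pow_succ, ih, mul_assoc, ← mul_assoc (b ^ j), pow_mul_pow_eq_pow_mul_pow h,
      mul_assoc, ← mul_assoc, ← pow_add, ← pow_succ, Ssum_succ]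
    ring_nf

end Monoid

namespace MulAut

variable {G : Type*} [Group G]

theorem ext_of_closure_pair {σ τ : G} (hgen : Subgroup.closure {σ, τ} = ⊤) {ψ ψ' : MulAut G}
    (hσ : ψ σ = ψ' σ) (hτ : ψ τ = ψ' τ) : ψ = ψ' :=
  MulEquiv.toMonoidHom_injective <|
    MonoidHom.eq_of_eqOn_dense hgen (by rintro _ (rfl | rfl) <;> assumption)

theorem pow_apply_pow_of_apply_eq_pow {φ : MulAut G} {σ : G} {s : ℕ} (h : φ σ = σ ^ s)
    (j n : ℕ) : (φ ^ j) (σ ^ n) = σ ^ (s ^ j * n) := by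
  induction j generalizing n with
  | zero => simp
  | succ j ih => rw [pow_succ, mul_apply, map_pow, h, ← pow_mul, ih, pow_succ, mul_assoc]

theorem pow_apply_of_apply_eq {φ : MulAut G} {τ : G} (h : φ τ = τ) (j : ℕ) : (φ ^ j) τ = τ := by
  induction j with
  | zero => rfl
  | succ j ih => rw [pow_succ, mul_apply, h, ih]

theorem pow_apply_eq_pow_mul {θ : MulAut G} {σ τ : G} {z : ℕ}
    (hθσ : θ σ = σ) (hθτ : θ τ = σ ^ z * τ) (m : ℕ) : (θ ^ m) τ = σ ^ (z * m) * τ := by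
  induction m with
  | zero => simp
  | succ m ih =>
    rw [pow_succ, mul_apply, hθτ, map_mul, ih, map_pow, pow_apply_of_apply_eq hθσ,
      ← mul_assoc, ← pow_add, mul_add_one, add_comm]

theorem mul_eq_pow_mul_of_closure_pair {σ τ : G} {z s : ℕ} {θ φ : MulAut G}
    (hgen : Subgroup.closure {σ, τ} = ⊤) (hθσ : θ σ = σ) (hθτ : θ τ = σ ^ z * τ)
    (hφσ : φ σ = σ ^ s) (hφτ : φ τ = τ) : φ * θ = θ ^ s * φ := by
  refine ext_of_closure_pair hgen ?_ ?_
  · rw [mul_apply, mul_apply, hθσ, hφσ, map_pow, pow_apply_of_apply_eq hθσ]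
  · rw [mul_apply, mul_apply, hθτ, hφτ, pow_apply_eq_pow_mul hθσ hθτ,
      map_mul, map_pow, hφσ, hφτ, ← pow_mul, mul_comm]

end MulAut

theorem pow_val_pow {G : Type*} [Monoid G] (σ : G) (x : ZMod (orderOf σ)) (j : ℕ) :
    σ ^ (x ^ j).val = σ ^ (x.val ^ j) := by
  induction j with
  | zero => rw [pow_zero, ZMod.val_one_eq_one_mod, pow_mod_orderOf, pow_zero]
  | succ j ih => rw [pow_succ, ZMod.val_mul, pow_mod_orderOf, pow_mul, ih, ← pow_mul, pow_succ]

theorem Hol.mk_mul_mk {G : Type*} [Group G] {σ τ : G} {k z s : ℕ} {θ φ : MulAut G}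
    (hrel : τ * σ * τ⁻¹ = σ ^ k) (hθσ : θ σ = σ) (hθτ : θ τ = σ ^ z * τ)
    (hφσ : φ σ = σ ^ s) (hφτ : φ τ = τ) (hφθ : φ * θ = θ ^ s * φ) (A a c j : ℕ) :
    (⟨σ ^ A * τ ^ j, θ ^ (c * Ssum s j) * φ ^ j⟩ : Hol G) * ⟨σ ^ a * τ, θ ^ c * φ⟩ =
      ⟨σ ^ (A + k ^ j * (s ^ j * a + z * (c * Ssum s j))) * τ ^ (j + 1),
        θ ^ (c * Ssum s (j + 1)) * φ ^ (j + 1)⟩ := by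
  have hτσ : τ * σ = σ ^ k * τ := mul_inv_eq_iff_eq_mul.mp hrel
  ext
  · dsimp only [SemidirectProduct.mul_left]
    rw [MonoidHom.id_apply, MulAut.mul_apply, map_mul, map_mul,
      MulAut.pow_apply_pow_of_apply_eq_pow hφσ, MulAut.pow_apply_of_apply_eq hφτ, map_pow,
      MulAut.pow_apply_of_apply_eq hθσ, MulAut.pow_apply_eq_pow_mul hθσ hθτ,
      ← mul_assoc (σ ^ (s ^ j * a)), ← pow_add, mul_assoc (σ ^ A), ← mul_assoc (τ ^ j),
      pow_mul_pow_eq_pow_mul_pow hτσ, mul_assoc, ← pow_succ, ← mul_assoc, ← pow_add]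
  · rw [SemidirectProduct.mul_right, ← pow_mul_pow_eq_pow_Ssum_mul_pow hφθ, ← pow_succ,
      pow_mul_pow_eq_pow_Ssum_mul_pow hφθ]

theorem map_pow_of_apply_eq_pow_val {G : Type*} [Group G] {σ τ : G}
    (hgen : Subgroup.closure {σ, τ} = ⊤) {Φ : (ZMod (orderOf σ))ˣ → MulAut G}
    (hΦ : ∀ u, Φ u σ = σ ^ (u : ZMod (orderOf σ)).val ∧ Φ u τ = τ) (u : (ZMod (orderOf σ))ˣ)
    (j : ℕ) : Φ (u ^ j) = Φ u ^ j := by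
  refine MulAut.ext_of_closure_pair hgen ?_ ?_
  · rw [(hΦ _).1, Units.val_pow_eq_pow_val, pow_val_pow]
    simpa using (MulAut.pow_apply_pow_of_apply_eq_pow (hΦ u).1 j 1).symm
  · rw [(hΦ _).2, MulAut.pow_apply_of_apply_eq (hΦ u).2]

theorem exponent_recurrence (a c k s z j : ℕ) :
    a * Ssum (s * k) j + c * z * k * Tsum k s j + k ^ j * (s ^ j * a + z * (c * Ssum s j)) =
      a * Ssum (s * k) (j + 1) + c * z * k * Tsum k s (j + 1) := by
  rw [Ssum_succ, mul_assoc (c * z), mul_assoc (c * z), mul_Tsum_succ]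
  ring

theorem x_pow_formula_general (e k : ℕ)
    (G : Type) [Group G] (σ τ : G)
    (hσ : orderOf σ = e)
    (hrel : τ * σ * τ⁻¹ = σ ^ k) (hgen : Subgroup.closure {σ, τ} = ⊤)
    (z : ℕ)
    (θ : MulAut G) (hθσ : θ σ = σ) (hθτ : θ τ = σ ^ z * τ)
    (Φ : (ZMod e)ˣ → MulAut G)
    (hΦ : ∀ u : (ZMod e)ˣ, Φ u σ = σ ^ ((u : ZMod e)).val ∧ Φ u τ = τ)
    (a c : ℕ) (u : (ZMod e)ˣ) (s : ℕ) (hs : s = ((u : ZMod e)).val)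
    (x : Hol G) (hx : x = ⟨σ ^ a * τ, θ ^ c * Φ u⟩) :
    ∀ j : ℕ,
      x ^ j = ⟨σ ^ (a * Ssum (s * k) j + c * z * k * Tsum k s j) * τ ^ j,
        θ ^ (c * Ssum s j) * Φ (u ^ j)⟩ := by
  subst hσ hs hx
  have hΦpow := map_pow_of_apply_eq_pow_val hgen hΦ u
  have hφθ := MulAut.mul_eq_pow_mul_of_closure_pair hgen hθσ hθτ (hΦ u).1 (hΦ u).2
  intro j
  induction j with
  | zero => rw [hΦpow]; ext <;> simp [Ssum, Tsum]
  | succ j ih =>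
    rw [pow_succ, ih, hΦpow, hΦpow, Hol.mk_mul_mk hrel hθσ hθτ (hΦ u).1 (hΦ u).2 hφθ,
      exponent_recurrence]

/-- **Lemma (powers in the holomorph).** Let `G = G(d,e,k)` with `z = gcd(e,k-1)`,
`g = e/z`, let `θ` and `φ_u` (`u ∈ U(e)`, with representative `s = u.val`) be the
automorphisms with `θ(σ) = σ`, `θ(τ) = σ^z τ`, `φ_u(σ) = σ^s`, `φ_u(τ) = τ`, and let
`x = [σ^a τ, θ^c φ_u] ∈ Hol(G)`. Then for all `j ≥ 0`,
`x^j = [σ^{A(j)} τ^j, θ^{c·S(s,j)} φ_{u^j}]` where `A(j) = a·S(sk,j) + c·z·k·T(k,s,j)`. -/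
theorem x_pow_formula (d e k : ℕ) (hd : 0 < d) (he : 0 < e) (hk : 0 < k)
    (hcop : Nat.Coprime d e) (hord : orderOf (k : ZMod e) = d)
    (hsf : Squarefree (d * e))
    (G : Type) [Group G] (σ τ : G)
    (hσ : orderOf σ = e) (hτ : orderOf τ = d)
    (hrel : τ * σ * τ⁻¹ = σ ^ k) (hgen : Subgroup.closure {σ, τ} = ⊤)
    (z g : ℕ) (hz : z = Nat.gcd e (k - 1)) (hg : g = e / z)
    (θ : MulAut G) (hθσ : θ σ = σ) (hθτ : θ τ = σ ^ z * τ)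
    (Φ : (ZMod e)ˣ → MulAut G)
    (hΦ : ∀ u : (ZMod e)ˣ, Φ u σ = σ ^ ((u : ZMod e)).val ∧ Φ u τ = τ)
    (a c : ℕ) (u : (ZMod e)ˣ) (s : ℕ) (hs : s = ((u : ZMod e)).val)
    (x : Hol G) (hx : x = ⟨σ ^ a * τ, θ ^ c * Φ u⟩) :
    ∀ j : ℕ,
      x ^ j = ⟨σ ^ (a * Ssum (s * k) j + c * z * k * Tsum k s j) * τ ^ j,
        θ ^ (c * Ssum s j) * Φ (u ^ j)⟩ :=
  x_pow_formula_general e k G σ τ hσ hrel hgen z θ hθσ hθτ Φ hΦ a c u s hs x hx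
end

section
/- Let G = G(d,e,k) be a group of squarefree order n = d·e, and let C be a cyclic subgroup of Hol(G) = G ⋊ Aut(G) that acts regularly on G. Then C has a generator of the form x = [σ^a τ, θ^c φ_s], in which τ occurs with exponent 1; moreover, C contains exactly φ(e) generators of this form, where φ is Euler's totient function. -/
/-- A squarefree number divides `m` iff all its prime factors do. -/
lemma RCG.sqfree_dvd_of_primes {z m : ℕ} (hz : Squarefree z)
    (h : ∀ p : ℕ, p.Prime → p ∣ z → p ∣ m) : z ∣ m := by
  have hprod := Nat.prod_primeFactors_of_squarefree hz
  rw [← hprod]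
  exact Finset.prod_primes_dvd m
    (fun p hp => (Nat.prime_of_mem_primeFactors hp).prime)
    (fun p hp => h p (Nat.prime_of_mem_primeFactors hp) (Nat.dvd_of_mem_primeFactors hp))

/-- Key arithmetic lemma: if `e ∣ m * (1 + k + ⋯ + k^{d-1})` with `e` squarefree
coprime to `d`, then `gcd e (k-1) ∣ m`. -/
lemma RCG.key_arith (d e k : ℕ) (hk : 0 < k) (hcop : Nat.Coprime d e)
    (hse : Squarefree e) (m : ℕ)
    (h : e ∣ m * ∑ i ∈ Finset.range d, k ^ i) : Nat.gcd e (k - 1) ∣ m := by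
  set S := ∑ i ∈ Finset.range d, k ^ i with hS
  set z := Nat.gcd e (k - 1) with hzdef
  have hzdvde : z ∣ e := Nat.gcd_dvd_left _ _
  have hzsf : Squarefree z := hse.squarefree_of_dvd hzdvde
  refine RCG.sqfree_dvd_of_primes hzsf (fun p pp hpz => ?_)
  have hpe : p ∣ e := hpz.trans hzdvde
  have hpk1 : p ∣ k - 1 := hpz.trans (Nat.gcd_dvd_right _ _)
  have hpmS : p ∣ m * S := hpe.trans h
  rcases (Nat.Prime.dvd_mul pp).mp hpmS with hm | hs
  · exact hm
  · exfalso
    have hk1 : (k : ZMod p) = 1 := by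
      have h0 : ((k - 1 : ℕ) : ZMod p) = 0 := (ZMod.natCast_eq_zero_iff _ _).mpr hpk1
      have hk' : k - 1 + 1 = k := Nat.succ_pred_eq_of_pos hk
      calc (k : ZMod p) = ((k - 1 + 1 : ℕ) : ZMod p) := by rw [hk']
        _ = ((k - 1 : ℕ) : ZMod p) + 1 := by push_cast; ring
        _ = 1 := by rw [h0, zero_add]
    have hSd : ((S : ℕ) : ZMod p) = (d : ZMod p) := by
      rw [hS]; push_cast; simp [hk1]
    have hSp : ((S : ℕ) : ZMod p) = 0 := (ZMod.natCast_eq_zero_iff _ _).mpr hs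
    have hpd : p ∣ d := (ZMod.natCast_eq_zero_iff _ _).mp (hSd ▸ hSp)
    have hone : p ∣ Nat.gcd d e := Nat.dvd_gcd hpd hpe
    rw [hcop] at hone
    exact Nat.Prime.one_lt pp |>.ne' (Nat.dvd_one.mp hone)

/-- Fibers of a surjective homomorphism from a finite group. -/
lemma RCG.card_fiber_mul {A B : Type*} [Group A] [Group B] [Finite A] (f : A →* B)
    (hf : Function.Surjective f) (b : B) :
    Nat.card B * Nat.card {a : A // f a = b} = Nat.card A := by
  obtain ⟨a₀, ha₀⟩ := hf b
  have e1 : {a : A // f a = b} ≃ f.ker := by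
    refine ⟨fun a => ⟨a.1 * a₀⁻¹, ?_⟩, fun x => ⟨x.1 * a₀, ?_⟩, ?_, ?_⟩
    · rw [MonoidHom.mem_ker, map_mul, a.2, map_inv, ha₀, mul_inv_cancel]
    · rw [map_mul, ha₀, MonoidHom.mem_ker.mp x.2, one_mul]
    · intro a; ext; simp
    · intro x; ext; simp
  have e2 : (A ⧸ f.ker) ≃* B := QuotientGroup.quotientKerEquivOfSurjective f hf
  have h3 : Nat.card A = Nat.card (A ⧸ f.ker) * Nat.card f.ker :=
    Subgroup.card_eq_card_quotient_mul_card_subgroup f.ker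
  rw [Nat.card_congr e1, h3, Nat.card_congr e2.toEquiv]

/-- Extract a natural-number exponent representation from membership in `zpowers`. -/
lemma RCG.exists_pow_nat {M : Type*} [Group M] {g x : M} (hpos : 0 < orderOf g)
    (hx : x ∈ Subgroup.zpowers g) : ∃ r : ℕ, r < orderOf g ∧ g ^ r = x := by
  obtain ⟨i, hi⟩ := Subgroup.mem_zpowers_iff.mp hx
  have hne : (orderOf g : ℤ) ≠ 0 := by exact_mod_cast hpos.ne'
  have h0 : 0 ≤ i % (orderOf g : ℤ) := Int.emod_nonneg _ hne
  have h1 : i % (orderOf g : ℤ) < (orderOf g : ℤ) := Int.emod_lt_of_pos _ (by exact_mod_cast hpos)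
  refine ⟨(i % (orderOf g : ℤ)).toNat, by omega, ?_⟩
  rw [← zpow_natCast, Int.toNat_of_nonneg h0, zpow_mod_orderOf, hi]

set_option maxHeartbeats 4000000 in
/-- **Proposition (generators with `τ`-exponent 1).** Let `G = G(d,e,k)` of squarefree
order `n = d·e`, with automorphisms `θ` (`θ(σ) = σ`, `θ(τ) = σ^z τ`) and `φ_u`
(`φ_u(σ) = σ^{u.val}`, `φ_u(τ) = τ`). Every regular cyclic subgroup `C` of `Hol(G)` is
generated by an element of the form `x = [σ^a τ, θ^c φ_u]`, and `C` contains exactly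
`φ(e)` generators of this form. -/
theorem regular_cyclic_generator (d e k : ℕ) (hd : 0 < d) (he : 0 < e) (hk : 0 < k)
    (hcop : Nat.Coprime d e) (hord : orderOf (k : ZMod e) = d)
    (hsf : Squarefree (d * e))
    (G : Type) [Group G] (σ τ : G)
    (hσ : orderOf σ = e) (hτ : orderOf τ = d)
    (hrel : τ * σ * τ⁻¹ = σ ^ k) (hgen : Subgroup.closure {σ, τ} = ⊤)
    (z g : ℕ) (hz : z = Nat.gcd e (k - 1)) (hg : g = e / z)
    (θ : MulAut G) (hθσ : θ σ = σ) (hθτ : θ τ = σ ^ z * τ)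
    (Φ : (ZMod e)ˣ → MulAut G)
    (hΦ : ∀ u : (ZMod e)ˣ, Φ u σ = σ ^ ((u : ZMod e)).val ∧ Φ u τ = τ)
    (C : Subgroup (Hol G)) (hC : IsCyclic C) (hreg : IsRegularHolSubgroup G C) :
    (∃ (a c : ℕ) (u : (ZMod e)ˣ),
        Subgroup.zpowers ((⟨σ ^ a * τ, θ ^ c * Φ u⟩ : Hol G)) = C) ∧
      Nat.card {x : Hol G // Subgroup.zpowers x = C ∧
          ∃ (a c : ℕ) (u : (ZMod e)ˣ), x = ⟨σ ^ a * τ, θ ^ c * Φ u⟩} =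
        Nat.totient e := by
  classical
  have hse : Squarefree e := hsf.squarefree_of_dvd (Dvd.intro_left d rfl)
  have hτd : τ ^ d = 1 := by rw [← hτ]; exact pow_orderOf_eq_one τ
  have hσe : σ ^ e = 1 := by rw [← hσ]; exact pow_orderOf_eq_one σ
  -- commutation rules
  have hts : τ * σ = σ ^ k * τ := by
    have := hrel; rw [mul_inv_eq_iff_eq_mul] at this; exact this
  have hc1 : ∀ i : ℕ, τ * σ ^ i = σ ^ (i * k) * τ := by
    intro i
    induction i with
    | zero => simp
    | succ i ih =>
      calc τ * σ ^ (i + 1) = (τ * σ ^ i) * σ := by rw [pow_succ, mul_assoc]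
        _ = σ ^ (i * k) * (τ * σ) := by rw [ih, mul_assoc]
        _ = σ ^ (i * k) * (σ ^ k * τ) := by rw [hts]
        _ = σ ^ ((i + 1) * k) * τ := by rw [← mul_assoc, ← pow_add, add_mul, one_mul]
  have hcj : ∀ j i : ℕ, τ ^ j * σ ^ i = σ ^ (i * k ^ j) * τ ^ j := by
    intro j
    induction j with
    | zero => intro i; simp
    | succ j ih =>
      intro i
      calc τ ^ (j + 1) * σ ^ i = τ ^ j * (τ * σ ^ i) := by rw [pow_succ, mul_assoc]
        _ = τ ^ j * (σ ^ (i * k) * τ) := by rw [hc1]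
        _ = (τ ^ j * σ ^ (i * k)) * τ := by rw [mul_assoc]
        _ = σ ^ (i * k * k ^ j) * (τ ^ j * τ) := by rw [ih, mul_assoc]
        _ = σ ^ (i * k ^ (j + 1)) * τ ^ (j + 1) := by
            rw [← pow_succ, show i * k * k ^ j = i * k ^ (j + 1) by ring]
  -- power equalities
  have hσeq : ∀ i j : ℕ, σ ^ i = σ ^ j ↔ (i : ZMod e) = (j : ZMod e) := by
    intro i j; rw [pow_eq_pow_iff_modEq, hσ, ← ZMod.natCast_eq_natCast_iff]
  have hσone : ∀ i : ℕ, σ ^ i = 1 ↔ e ∣ i := by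
    intro i; rw [← hσ]; exact (orderOf_dvd_iff_pow_eq_one).symm
  -- trivial intersection
  have hint : ∀ x : G, x ∈ Subgroup.zpowers σ → x ∈ Subgroup.zpowers τ → x = 1 := by
    intro x h1 h2
    have d1 : orderOf x ∣ e := hσ ▸ orderOf_dvd_of_mem_zpowers h1
    have d2 : orderOf x ∣ d := hτ ▸ orderOf_dvd_of_mem_zpowers h2
    have h3 : orderOf x ∣ 1 := hcop ▸ Nat.dvd_gcd d2 d1
    exact orderOf_eq_one_iff.mp (Nat.dvd_one.mp h3)
  -- normal form
  have hNF : ∀ x : G, ∃ a b : ℕ, x = σ ^ a * τ ^ b := by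
    intro x
    have hx : x ∈ Subgroup.closure {σ, τ} := hgen ▸ Subgroup.mem_top x
    induction hx using Subgroup.closure_induction with
    | mem y hy =>
      rcases hy with rfl | rfl
      · exact ⟨1, 0, by simp⟩
      · exact ⟨0, 1, by simp⟩
    | one => exact ⟨0, 0, by simp⟩
    | mul y w hy hw ihy ihw =>
      obtain ⟨a, b, rfl⟩ := ihy
      obtain ⟨a', b', rfl⟩ := ihw
      refine ⟨a + a' * k ^ b, b + b', ?_⟩
      calc σ ^ a * τ ^ b * (σ ^ a' * τ ^ b')
          = σ ^ a * (τ ^ b * σ ^ a') * τ ^ b' := by group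
        _ = σ ^ a * (σ ^ (a' * k ^ b) * τ ^ b) * τ ^ b' := by rw [hcj]
        _ = σ ^ (a + a' * k ^ b) * τ ^ (b + b') := by rw [pow_add, pow_add]; group
    | inv y hy ihy =>
      obtain ⟨a, b, rfl⟩ := ihy
      refine ⟨a * (e - 1) * k ^ (b * (d - 1)), b * (d - 1), ?_⟩
      have hmul : (σ ^ a * τ ^ b) * (τ ^ (b * (d - 1)) * σ ^ (a * (e - 1))) = 1 := by
        have h1 : τ ^ b * τ ^ (b * (d - 1)) = 1 := by
          rw [← pow_add, show b + b * (d - 1) = d * b by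
            have : d - 1 + 1 = d := Nat.succ_pred_eq_of_pos hd
            nlinarith [this]]
          rw [pow_mul, hτd, one_pow]
        have h2 : σ ^ a * σ ^ (a * (e - 1)) = 1 := by
          rw [← pow_add, show a + a * (e - 1) = e * a by
            have : e - 1 + 1 = e := Nat.succ_pred_eq_of_pos he
            nlinarith [this]]
          rw [pow_mul, hσe, one_pow]
        calc (σ ^ a * τ ^ b) * (τ ^ (b * (d - 1)) * σ ^ (a * (e - 1)))
            = σ ^ a * (τ ^ b * τ ^ (b * (d - 1))) * σ ^ (a * (e - 1)) := by group
          _ = σ ^ a * σ ^ (a * (e - 1)) := by rw [h1]; group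
          _ = 1 := h2
      have hinv := inv_eq_of_mul_eq_one_right hmul
      rw [hinv, hcj]
  -- finiteness and cardinality of G
  have hsurjG : Function.Surjective
      (fun p : Fin e × Fin d => σ ^ (p.1 : ℕ) * τ ^ (p.2 : ℕ)) := by
    intro x
    obtain ⟨a, b, rfl⟩ := hNF x
    refine ⟨(⟨a % e, Nat.mod_lt _ he⟩, ⟨b % d, Nat.mod_lt _ hd⟩), ?_⟩
    show σ ^ (a % e) * τ ^ (b % d) = σ ^ a * τ ^ b
    rw [show a % e = a % orderOf σ by rw [hσ], show b % d = b % orderOf τ by rw [hτ],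
      pow_mod_orderOf, pow_mod_orderOf]
  have hinjG : Function.Injective
      (fun p : Fin e × Fin d => σ ^ (p.1 : ℕ) * τ ^ (p.2 : ℕ)) := by
    rintro ⟨a, b⟩ ⟨a', b'⟩ hab
    simp only at hab
    have hw : (σ ^ (a' : ℕ))⁻¹ * σ ^ (a : ℕ) = τ ^ (b' : ℕ) * (τ ^ (b : ℕ))⁻¹ := by
      calc (σ ^ (a' : ℕ))⁻¹ * σ ^ (a : ℕ)
          = (σ ^ (a' : ℕ))⁻¹ * ((σ ^ (a : ℕ) * τ ^ (b : ℕ)) * (τ ^ (b : ℕ))⁻¹) := by group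
        _ = (σ ^ (a' : ℕ))⁻¹ * ((σ ^ (a' : ℕ) * τ ^ (b' : ℕ)) * (τ ^ (b : ℕ))⁻¹) := by rw [hab]
        _ = τ ^ (b' : ℕ) * (τ ^ (b : ℕ))⁻¹ := by group
    have hmem1 : (σ ^ (a' : ℕ))⁻¹ * σ ^ (a : ℕ) ∈ Subgroup.zpowers σ :=
      mul_mem (inv_mem (Subgroup.pow_mem _ (Subgroup.mem_zpowers σ) _))
        (Subgroup.pow_mem _ (Subgroup.mem_zpowers σ) _)
    have hmem2 : (σ ^ (a' : ℕ))⁻¹ * σ ^ (a : ℕ) ∈ Subgroup.zpowers τ := by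
      rw [hw]
      exact mul_mem (Subgroup.pow_mem _ (Subgroup.mem_zpowers τ) _)
        (inv_mem (Subgroup.pow_mem _ (Subgroup.mem_zpowers τ) _))
    have h1 := hint _ hmem1 hmem2
    have hσa : σ ^ (a : ℕ) = σ ^ (a' : ℕ) := by
      rw [inv_mul_eq_one] at h1; exact h1.symm
    have hτb : τ ^ (b : ℕ) = τ ^ (b' : ℕ) := by
      have h2 : τ ^ (b' : ℕ) * (τ ^ (b : ℕ))⁻¹ = 1 := by
        rw [← hw]; exact hint _ hmem1 hmem2
      rw [mul_inv_eq_one] at h2; exact h2.symm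
    have ha : (a : ℕ) = (a' : ℕ) := by
      have h3 := pow_eq_pow_iff_modEq.mp hσa
      rw [hσ] at h3
      have h4 : (a : ℕ) % e = (a' : ℕ) % e := h3
      rwa [Nat.mod_eq_of_lt a.2, Nat.mod_eq_of_lt a'.2] at h4
    have hb : (b : ℕ) = (b' : ℕ) := by
      have h3 := pow_eq_pow_iff_modEq.mp hτb
      rw [hτ] at h3
      have h4 : (b : ℕ) % d = (b' : ℕ) % d := h3
      rwa [Nat.mod_eq_of_lt b.2, Nat.mod_eq_of_lt b'.2] at h4
    exact Prod.ext (Fin.ext ha) (Fin.ext hb)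
  haveI hGfin : Finite G := Finite.of_surjective _ hsurjG
  have hcardG : Nat.card G = d * e := by
    have h1 := Nat.card_eq_of_bijective _ ⟨hinjG, hsurjG⟩
    simp only [Nat.card_eq_fintype_card, Fintype.card_prod, Fintype.card_fin] at h1
    rw [← h1, mul_comm]
  -- conjugation of powers
  have conjpow : ∀ (w y : G) (i : ℤ), w * y ^ i * w⁻¹ = (w * y * w⁻¹) ^ i := by
    intro w y i
    rw [← MulAut.conj_apply w y, ← MulAut.conj_apply w (y ^ i)]
    exact map_zpow (MulAut.conj w) y i
  have hτinvστ : τ⁻¹ * σ * τ = σ ^ (k ^ (d - 1)) := by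
    have hτinv : τ⁻¹ = τ ^ (d - 1) := by
      apply inv_eq_of_mul_eq_one_left
      rw [← pow_succ, show d - 1 + 1 = d by omega, hτd]
    have h2 : τ ^ (d - 1) * σ = σ ^ (k ^ (d - 1)) * τ ^ (d - 1) := by
      have h3 := hcj (d - 1) 1
      simpa using h3
    calc τ⁻¹ * σ * τ = (τ ^ (d - 1) * σ) * τ := by rw [hτinv]
      _ = σ ^ (k ^ (d - 1)) * (τ ^ (d - 1) * τ) := by rw [h2, mul_assoc]
      _ = σ ^ (k ^ (d - 1)) := by
          rw [← pow_succ, show d - 1 + 1 = d by omega, hτd, mul_one]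
  have hNnormal : (Subgroup.zpowers σ).Normal := by
    rw [← Subgroup.normalizer_eq_top_iff, eq_top_iff, ← hgen, Subgroup.closure_le]
    intro x hx
    rcases hx with h | h
    · rw [show x = σ from h]
      exact SetLike.mem_coe.mpr (Subgroup.le_normalizer (Subgroup.mem_zpowers σ))
    · rw [show x = τ from h]
      rw [SetLike.mem_coe, Subgroup.mem_normalizer_iff]
      intro y
      constructor
      · intro hy
        obtain ⟨i, rfl⟩ := Subgroup.mem_zpowers_iff.mp hy
        rw [conjpow, hrel]
        exact Subgroup.zpow_mem _ (Subgroup.pow_mem _ (Subgroup.mem_zpowers σ) k) i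
      · intro hy
        obtain ⟨i, hi⟩ := Subgroup.mem_zpowers_iff.mp hy
        have hy2 : y = τ⁻¹ * σ ^ i * τ := by rw [hi]; group
        rw [hy2, show τ⁻¹ * σ ^ i * τ = τ⁻¹ * σ ^ i * τ⁻¹⁻¹ by rw [inv_inv], conjpow,
          inv_inv, hτinvστ]
        exact Subgroup.zpow_mem _ (Subgroup.pow_mem _ (Subgroup.mem_zpowers σ) _) i
  haveI := hNnormal
  set π : G →* G ⧸ Subgroup.zpowers σ := QuotientGroup.mk' (Subgroup.zpowers σ) with hπ
  have hπσpow : ∀ i : ℕ, π (σ ^ i) = 1 := by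
    intro i
    rw [QuotientGroup.mk'_apply, QuotientGroup.eq_one_iff]
    exact Subgroup.pow_mem _ (Subgroup.mem_zpowers σ) i
  have hcardN : Nat.card (Subgroup.zpowers σ) = e := by
    rw [Nat.card_zpowers, hσ]
  have hcardQ : Nat.card (G ⧸ Subgroup.zpowers σ) = d := by
    have h1 := Subgroup.card_eq_card_quotient_mul_card_subgroup (Subgroup.zpowers σ)
    rw [hcardG, hcardN] at h1
    have h2 := Nat.eq_of_mul_eq_mul_right he h1.symm
    omega
  have hπτ : orderOf (π τ) = d := by
    apply Nat.dvd_antisymm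
    · exact orderOf_dvd_of_pow_eq_one (by rw [← map_pow, hτd, map_one])
    · have h1 : π (τ ^ orderOf (π τ)) = 1 := by rw [map_pow, pow_orderOf_eq_one]
      have hmem : τ ^ orderOf (π τ) ∈ Subgroup.zpowers σ := by
        rwa [QuotientGroup.mk'_apply, QuotientGroup.eq_one_iff] at h1
      have h2 : τ ^ orderOf (π τ) = 1 :=
        hint _ hmem (Subgroup.pow_mem _ (Subgroup.mem_zpowers τ) _)
      rw [← hτ]; exact orderOf_dvd_of_pow_eq_one h2
  -- extensionality for automorphisms
  have hext : ∀ ψ₁ ψ₂ : MulAut G, ψ₁ σ = ψ₂ σ → ψ₁ τ = ψ₂ τ → ψ₁ = ψ₂ := by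
    intro ψ₁ ψ₂ h1 h2
    have heq : ψ₁.toMonoidHom = ψ₂.toMonoidHom := by
      apply MonoidHom.eq_of_eqOn_dense hgen
      rintro x (rfl | rfl) <;> assumption
    exact MulEquiv.toMonoidHom_injective heq
  -- powers of θ
  have hθc : ∀ c : ℕ, (θ ^ c) σ = σ ∧ (θ ^ c) τ = σ ^ (c * z) * τ := by
    intro c
    induction c with
    | zero => simp
    | succ c ih =>
      constructor
      · rw [pow_succ', MulAut.mul_apply, ih.1, hθσ]
      · rw [pow_succ, MulAut.mul_apply, hθτ, map_mul, map_pow, ih.1, ih.2,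
          ← mul_assoc, ← pow_add, show z + c * z = (c + 1) * z by ring]
  -- classification of automorphisms
  have hclass : ∀ ψ : MulAut G, ∃ (c : ℕ) (u : (ZMod e)ˣ), ψ = θ ^ c * Φ u := by
    intro ψ
    have hordψσ : orderOf (ψ σ) = e := by rw [ψ.orderOf_eq, hσ]
    have hψσmem : ψ σ ∈ Subgroup.zpowers σ := by
      have h1 : orderOf (π (ψ σ)) ∣ e := by
        rw [← hordψσ]; exact orderOf_map_dvd π (ψ σ)
      have h2 : orderOf (π (ψ σ)) ∣ d := by
        rw [← hcardQ]; exact orderOf_dvd_natCard _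
      have h3 : orderOf (π (ψ σ)) = 1 := Nat.dvd_one.mp (hcop ▸ Nat.dvd_gcd h2 h1)
      have h4 : π (ψ σ) = 1 := orderOf_eq_one_iff.mp h3
      rwa [QuotientGroup.mk'_apply, QuotientGroup.eq_one_iff] at h4
    obtain ⟨s, hslt, hψσ⟩ := RCG.exists_pow_nat (x := ψ σ) (by rw [hσ]; exact he) hψσmem
    have hscop : Nat.Coprime s e := by
      have ho : orderOf (σ ^ s) = e := by rw [hψσ, hordψσ]
      rw [orderOf_pow, hσ] at ho
      rcases Nat.div_eq_self.mp ho with h0 | h0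
      · omega
      · exact Nat.coprime_comm.mp h0
    obtain ⟨m, b, hmb⟩ := hNF (ψ τ)
    have hb1 : τ ^ b = τ := by
      have hrel2 : ψ τ * ψ σ * (ψ τ)⁻¹ = (ψ σ) ^ k := by
        rw [← map_mul, ← map_inv, ← map_mul, hrel, map_pow]
      rw [← hψσ, hmb] at hrel2
      have hL : σ ^ m * τ ^ b * σ ^ s * (σ ^ m * τ ^ b)⁻¹ = σ ^ (s * k ^ b) := by
        calc σ ^ m * τ ^ b * σ ^ s * (σ ^ m * τ ^ b)⁻¹
            = σ ^ m * (τ ^ b * σ ^ s) * (τ ^ b)⁻¹ * (σ ^ m)⁻¹ := by group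
          _ = σ ^ m * (σ ^ (s * k ^ b) * τ ^ b) * (τ ^ b)⁻¹ * (σ ^ m)⁻¹ := by rw [hcj]
          _ = σ ^ m * σ ^ (s * k ^ b) * (σ ^ m)⁻¹ := by group
          _ = σ ^ (s * k ^ b) := by
              rw [← pow_add, show m + s * k ^ b = s * k ^ b + m by ring, pow_add,
                mul_inv_cancel_right]
      rw [hL, ← pow_mul] at hrel2
      have hzm1 : ((s * k ^ b : ℕ) : ZMod e) = ((s * k : ℕ) : ZMod e) :=
        (hσeq _ _).mp hrel2
      have hsu : IsUnit (s : ZMod e) := (ZMod.isUnit_iff_coprime s e).mpr hscop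
      have hkb : (k : ZMod e) ^ b = (k : ZMod e) ^ 1 := by
        push_cast at hzm1
        rw [pow_one]
        exact hsu.mul_left_cancel hzm1
      have hfo : IsOfFinOrder (k : ZMod e) := orderOf_pos_iff.mp (by rw [hord]; exact hd)
      have hku : IsUnit (k : ZMod e) := hfo.isUnit
      have hkbu : hku.unit ^ b = hku.unit ^ 1 := by
        apply Units.ext
        rw [Units.val_pow_eq_pow_val, Units.val_pow_eq_pow_val, IsUnit.unit_spec]
        exact hkb
      have hQd : orderOf hku.unit = d := by
        rw [← orderOf_units, IsUnit.unit_spec, hord]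
      have hmod : b ≡ 1 [MOD d] := by
        have h5 := pow_eq_pow_iff_modEq.mp hkbu
        rwa [hQd] at h5
      have h6 := pow_eq_pow_iff_modEq.mpr (show b ≡ 1 [MOD orderOf τ] by rwa [hτ])
      simpa using h6
    rw [hb1] at hmb
    have hpowd : ∀ bb : ℕ,
        (σ ^ m * τ) ^ bb = σ ^ (m * ∑ i ∈ Finset.range bb, k ^ i) * τ ^ bb := by
      intro bb
      induction bb with
      | zero => simp
      | succ bb ih =>
        rw [pow_succ, ih, Finset.sum_range_succ]
        calc σ ^ (m * ∑ i ∈ Finset.range bb, k ^ i) * τ ^ bb * (σ ^ m * τ)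
            = σ ^ (m * ∑ i ∈ Finset.range bb, k ^ i) * (τ ^ bb * σ ^ m) * τ := by group
          _ = σ ^ (m * ∑ i ∈ Finset.range bb, k ^ i) * (σ ^ (m * k ^ bb) * τ ^ bb) * τ := by
              rw [hcj]
          _ = σ ^ (m * (∑ i ∈ Finset.range bb, k ^ i + k ^ bb)) * τ ^ (bb + 1) := by
              rw [show m * (∑ i ∈ Finset.range bb, k ^ i + k ^ bb) =
                m * ∑ i ∈ Finset.range bb, k ^ i + m * k ^ bb by ring, pow_add, pow_succ]
              group
    have hψτd : (ψ τ) ^ d = 1 := by rw [← map_pow, hτd, map_one]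
    rw [hmb, hpowd d, hτd, mul_one] at hψτd
    have hedvd : e ∣ m * ∑ i ∈ Finset.range d, k ^ i := (hσone _).mp hψτd
    have hzm : z ∣ m := hz ▸ RCG.key_arith d e k hk hcop hse m hedvd
    obtain ⟨c, hc⟩ := hzm
    refine ⟨c, ZMod.unitOfCoprime s hscop, ?_⟩
    apply hext
    · rw [← hψσ, MulAut.mul_apply, (hΦ _).1, ZMod.coe_unitOfCoprime, ZMod.val_natCast,
        map_pow, (hθc c).1, show s % e = s % orderOf σ by rw [hσ], pow_mod_orderOf]
    · rw [hmb, MulAut.mul_apply, (hΦ _).2, (hθc c).2, hc, mul_comm z c]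
  -- every automorphism fixes the quotient
  have hmk : ∀ (ψ : MulAut G) (y : G), π (ψ y) = π y := by
    intro ψ
    obtain ⟨c, u, rfl⟩ := hclass ψ
    have h1 : π.comp ((θ ^ c * Φ u : MulAut G) : G →* G) = π := by
      apply MonoidHom.eq_of_eqOn_dense hgen
      intro x hx
      rcases hx with h | h
      · rw [show x = σ from h]
        show π ((θ ^ c * Φ u) σ) = π σ
        have h2 := hπσpow 1
        rw [pow_one] at h2
        rw [MulAut.mul_apply, (hΦ u).1, map_pow, (hθc c).1, hπσpow, h2]
      · rw [show x = τ from h]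
        show π ((θ ^ c * Φ u) τ) = π τ
        rw [MulAut.mul_apply, (hΦ u).2, (hθc c).2, map_mul, hπσpow, one_mul]
    intro y
    exact DFunLike.congr_fun h1 y
  -- the homomorphism F : Hol G →* G ⧸ ⟨σ⟩
  set F : Hol G →* G ⧸ Subgroup.zpowers σ :=
    { toFun := fun x => π x.left
      map_one' := by
        show π (1 : Hol G).left = 1
        rw [SemidirectProduct.one_left, map_one]
      map_mul' := by
        intro x y
        show π ((x * y).left) = π x.left * π y.left
        rw [SemidirectProduct.mul_left, map_mul]
        congr 1
        exact hmk x.right y.left } with hF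
  have hFapp : ∀ x : Hol G, F x = π x.left := fun _ => rfl
  -- regularity gives a bijection with G via the left component
  obtain ⟨htrans, hfree⟩ := hreg
  have hlinj : Function.Injective (fun h : C => (h : Hol G).left) := by
    intro h₁ h₂ hl
    simp only at hl
    have hmem : ((h₁ : Hol G)⁻¹ * (h₂ : Hol G)) ∈ C := mul_mem (inv_mem h₁.2) h₂.2
    have hleft : ((h₁ : Hol G)⁻¹ * (h₂ : Hol G)).left = 1 := by
      rw [SemidirectProduct.mul_left, SemidirectProduct.inv_left, SemidirectProduct.inv_right]
      simp only [MonoidHom.id_apply]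
      rw [← map_mul, ← hl, inv_mul_cancel, map_one]
    have h0 : ((h₁ : Hol G)⁻¹ * (h₂ : Hol G)) = 1 := by
      apply hfree _ hmem 1
      rw [map_one, mul_one, hleft]
    have h1 : (h₁ : Hol G) = (h₂ : Hol G) := by rwa [inv_mul_eq_one] at h0
    exact Subtype.ext h1
  have hlsurj : Function.Surjective (fun h : C => (h : Hol G).left) := by
    intro y
    obtain ⟨h, hh, hy⟩ := htrans 1 y
    refine ⟨⟨h, hh⟩, ?_⟩
    simpa using hy
  haveI : Finite C := Finite.of_injective _ hlinj
  have hcardC : Nat.card C = d * e := by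
    rw [← hcardG]; exact Nat.card_eq_of_bijective _ ⟨hlinj, hlsurj⟩
  -- Hol G is finite
  haveI : Finite (MulAut G) :=
    Finite.of_injective (fun ψ : MulAut G => (ψ : G → G))
      (fun ψ₁ ψ₂ h => MulEquiv.ext (fun x => congrFun h x))
  haveI : Finite (Hol G) :=
    Finite.of_injective (fun x : Hol G => (x.left, x.right))
      (fun x y h => SemidirectProduct.ext (congrArg Prod.fst h) (congrArg Prod.snd h))
  -- a generator of C
  obtain ⟨γ, hγ⟩ := @IsCyclic.exists_generator C _ hC
  set g₀ : Hol G := (γ : Hol G) with hg₀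
  have hCz : Subgroup.zpowers g₀ = C := by
    apply le_antisymm (Subgroup.zpowers_le.mpr γ.2)
    intro x hx
    obtain ⟨i, hi⟩ := Subgroup.mem_zpowers_iff.mp (hγ ⟨x, hx⟩)
    refine Subgroup.mem_zpowers_iff.mpr ⟨i, ?_⟩
    simpa using congrArg Subtype.val hi
  have hordg : orderOf g₀ = d * e := by
    have h1 : orderOf γ = Nat.card C := by
      rw [← Nat.card_zpowers]
      have h2 : Subgroup.zpowers γ = ⊤ := by rw [eq_top_iff]; exact fun x _ => hγ x
      rw [h2, Subgroup.card_top]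
    have h2 : orderOf g₀ = orderOf γ := by
      rw [hg₀]
      exact orderOf_injective C.subtype Subtype.coe_injective γ
    rw [h2, h1, hcardC]
  -- F g₀ generates the quotient
  have hFg₀gen : ∀ y : G ⧸ Subgroup.zpowers σ, y ∈ Subgroup.zpowers (F g₀) := by
    intro y
    obtain ⟨x, hxq⟩ := QuotientGroup.mk'_surjective (Subgroup.zpowers σ) y
    obtain ⟨h, hh⟩ := hlsurj x
    simp only at hh
    obtain ⟨i, hi⟩ := Subgroup.mem_zpowers_iff.mp (hγ h)
    have h3 : g₀ ^ i = (h : Hol G) := by simpa using congrArg Subtype.val hi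
    have h4 : F (g₀ ^ i) = y := by rw [h3, hFapp, hh, hxq]
    rw [← h4, map_zpow]
    exact Subgroup.zpow_mem _ (Subgroup.mem_zpowers _) i
  have hfγd : orderOf (F g₀) = d := by
    apply Nat.dvd_antisymm
    · rw [← hcardQ]; exact orderOf_dvd_natCard _
    · rw [← hπτ]
      exact orderOf_dvd_of_mem_zpowers (hFg₀gen (π τ))
  obtain ⟨t₀, ht₀lt, ht₀⟩ := RCG.exists_pow_nat (x := π τ) (g := F g₀)
    (by rw [hfγd]; exact hd) (hFg₀gen (π τ))
  have ht₀cop : Nat.Coprime t₀ d := by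
    have h1 : orderOf ((F g₀) ^ t₀) = d := by rw [ht₀, hπτ]
    rw [orderOf_pow, hfγd] at h1
    rcases Nat.div_eq_self.mp h1 with h0 | h0
    · omega
    · exact Nat.coprime_comm.mp h0
  haveI : NeZero (d * e) := ⟨by positivity⟩
  haveI : NeZero e := ⟨he.ne'⟩
  haveI : NeZero d := ⟨hd.ne'⟩
  have hiff1 : ∀ v : ℕ, (Subgroup.zpowers (g₀ ^ v) = C ↔ Nat.Coprime v (d * e)) := by
    intro v
    constructor
    · intro hv
      have h1 : orderOf (g₀ ^ v) = d * e := by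
        rw [← Nat.card_zpowers, hv, hcardC]
      rw [orderOf_pow, hordg] at h1
      rcases Nat.div_eq_self.mp h1 with h0 | h0
      · exact absurd h0 (by positivity)
      · exact Nat.coprime_comm.mp h0
    · intro hv
      obtain ⟨vu, hvu⟩ : ∃ u : (ZMod (d * e))ˣ, (u : ZMod (d * e)) = (v : ZMod (d * e)) :=
        ⟨ZMod.unitOfCoprime v hv, ZMod.coe_unitOfCoprime v hv⟩
      have hmod : (v * ((vu⁻¹ : (ZMod (d * e))ˣ) : ZMod (d * e)).val) ≡ 1 [MOD d * e] := by
        have h2 : ((v * ((vu⁻¹ : (ZMod (d * e))ˣ) : ZMod (d * e)).val : ℕ) : ZMod (d * e)) =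
            ((1 : ℕ) : ZMod (d * e)) := by
          push_cast
          rw [ZMod.natCast_val, ZMod.cast_id, ← hvu, Units.mul_inv]
        exact (ZMod.natCast_eq_natCast_iff _ _ _).mp h2
      have hg₀mem : g₀ ∈ Subgroup.zpowers (g₀ ^ v) := by
        have h3 : (g₀ ^ v) ^ ((vu⁻¹ : (ZMod (d * e))ˣ) : ZMod (d * e)).val = g₀ := by
          rw [← pow_mul]
          conv_rhs => rw [← pow_one g₀]
          apply pow_eq_pow_iff_modEq.mpr
          rwa [hordg]
        have hmem4 : (g₀ ^ v) ^ ((vu⁻¹ : (ZMod (d * e))ˣ) : ZMod (d * e)).val ∈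
            Subgroup.zpowers (g₀ ^ v) :=
          Subgroup.pow_mem _ (Subgroup.mem_zpowers _) _
        rwa [h3] at hmem4
      apply le_antisymm
      · rw [← hCz]
        exact Subgroup.zpowers_le.mpr (Subgroup.pow_mem _ (Subgroup.mem_zpowers g₀) v)
      · rw [← hCz]
        exact Subgroup.zpowers_le.mpr hg₀mem
  have hiff2 : ∀ v : ℕ, (F (g₀ ^ v) = π τ ↔ (v : ZMod d) = (t₀ : ZMod d)) := by
    intro v
    rw [map_pow, ← ht₀, pow_eq_pow_iff_modEq, hfγd, ZMod.natCast_eq_natCast_iff]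
  have hXiff : ∀ x : Hol G,
      ((∃ (a c : ℕ) (u : (ZMod e)ˣ), x = ⟨σ ^ a * τ, θ ^ c * Φ u⟩) ↔ F x = π τ) := by
    intro x
    constructor
    · rintro ⟨a, c, u, rfl⟩
      rw [hFapp]
      show π (σ ^ a * τ) = π τ
      rw [map_mul, hπσpow, one_mul]
    · intro hx
      rw [hFapp] at hx
      obtain ⟨c, u, hcu⟩ := hclass x.right
      have h1 : π (τ⁻¹ * x.left) = 1 := by
        rw [map_mul, map_inv, hx, inv_mul_cancel]
      have hmem : τ⁻¹ * x.left ∈ Subgroup.zpowers σ := by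
        rwa [QuotientGroup.mk'_apply, QuotientGroup.eq_one_iff] at h1
      obtain ⟨a, halt, ha⟩ := RCG.exists_pow_nat (x := τ⁻¹ * x.left)
        (by rw [hσ]; exact he) hmem
      have hxl : x.left = σ ^ (a * k) * τ := by
        have h2 : x.left = τ * σ ^ a := by rw [ha]; group
        rw [h2, hc1 a]
      exact ⟨a * k, c, u, SemidirectProduct.ext hxl hcu⟩
  have hmain : ∀ t : ZMod (d * e),
      ((IsUnit t ∧ ((t.val : ℕ) : ZMod d) = (t₀ : ZMod d)) ↔
        (Subgroup.zpowers (g₀ ^ t.val) = C ∧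
          ∃ (a c : ℕ) (u : (ZMod e)ˣ), g₀ ^ t.val = ⟨σ ^ a * τ, θ ^ c * Φ u⟩)) := by
    intro t
    rw [hiff1, hXiff, hiff2]
    constructor
    · rintro ⟨h1, h2⟩
      refine ⟨?_, h2⟩
      have h3 : IsUnit ((t.val : ℕ) : ZMod (d * e)) := by
        rwa [ZMod.natCast_val, ZMod.cast_id]
      exact (ZMod.isUnit_iff_coprime _ _).mp h3
    · rintro ⟨h1, h2⟩
      refine ⟨?_, h2⟩
      have h3 := (ZMod.isUnit_iff_coprime (t.val) (d * e)).mpr h1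
      rwa [ZMod.natCast_val, ZMod.cast_id] at h3
  have hbij : Function.Bijective
      (fun t : {t : ZMod (d * e) // IsUnit t ∧ ((t.val : ℕ) : ZMod d) = (t₀ : ZMod d)} =>
        (⟨g₀ ^ t.1.val, (hmain t.1).mp t.2⟩ :
          {x : Hol G // Subgroup.zpowers x = C ∧
            ∃ (a c : ℕ) (u : (ZMod e)ˣ), x = ⟨σ ^ a * τ, θ ^ c * Φ u⟩})) := by
    constructor
    · rintro ⟨t, ht⟩ ⟨t', ht'⟩ h
      have h1 : g₀ ^ t.val = g₀ ^ t'.val := congrArg Subtype.val h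
      have h2 := pow_eq_pow_iff_modEq.mp h1
      rw [hordg] at h2
      have h4 : t.val % (d * e) = t'.val % (d * e) := h2
      rw [Nat.mod_eq_of_lt (ZMod.val_lt t), Nat.mod_eq_of_lt (ZMod.val_lt t')] at h4
      exact Subtype.ext (ZMod.val_injective _ h4)
    · rintro ⟨x, hx⟩
      have hxC : x ∈ Subgroup.zpowers g₀ := by
        rw [hCz, ← hx.1]; exact Subgroup.mem_zpowers x
      obtain ⟨r, hrlt, hr⟩ := RCG.exists_pow_nat (g := g₀) (by rw [hordg]; positivity) hxC
      rw [hordg] at hrlt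
      have hval : ((r : ZMod (d * e))).val = r := by
        rw [ZMod.val_natCast, Nat.mod_eq_of_lt hrlt]
      refine ⟨⟨(r : ZMod (d * e)), ?_⟩, ?_⟩
      · apply (hmain _).mpr
        rw [hval, hr]; exact hx
      · apply Subtype.ext
        show g₀ ^ ((r : ZMod (d * e))).val = x
        rw [hval, hr]
  have hcardX : Nat.card {x : Hol G // Subgroup.zpowers x = C ∧
      ∃ (a c : ℕ) (u : (ZMod e)ˣ), x = ⟨σ ^ a * τ, θ ^ c * Φ u⟩} =
      Nat.card {t : ZMod (d * e) // IsUnit t ∧ ((t.val : ℕ) : ZMod d) = (t₀ : ZMod d)} :=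
    (Nat.card_eq_of_bijective _ hbij).symm
  -- counting the fiber using the units map
  have hu₀ : IsUnit ((t₀ : ℕ) : ZMod d) := (ZMod.isUnit_iff_coprime t₀ d).mpr ht₀cop
  have hdvd : d ∣ d * e := dvd_mul_right d e
  have hequiv : {t : ZMod (d * e) // IsUnit t ∧ ((t.val : ℕ) : ZMod d) = (t₀ : ZMod d)} ≃
      {u : (ZMod (d * e))ˣ // ZMod.unitsMap hdvd u = hu₀.unit} := by
    refine ⟨fun t => ⟨t.2.1.unit, ?_⟩, fun u => ⟨(u.1 : ZMod (d * e)), u.1.isUnit, ?_⟩, ?_, ?_⟩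
    · apply Units.ext
      rw [ZMod.unitsMap_def, Units.coe_map]
      show (ZMod.castHom hdvd (ZMod d)) (t.2.1.unit : ZMod (d * e)) = _
      rw [IsUnit.unit_spec, IsUnit.unit_spec, ZMod.castHom_apply, ← ZMod.natCast_val]
      exact t.2.2
    · have h5 := congrArg Units.val u.2
      show ((u.1 : ZMod (d * e)).val : ZMod d) = (t₀ : ZMod d)
      rw [ZMod.natCast_val]
      calc (ZMod.cast (u.1 : ZMod (d * e)) : ZMod d)
          = ((ZMod.unitsMap hdvd u.1 : (ZMod d)ˣ) : ZMod d) := rfl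
        _ = ((hu₀.unit : (ZMod d)ˣ) : ZMod d) := h5
        _ = (t₀ : ZMod d) := IsUnit.unit_spec _
    · intro t; exact Subtype.ext (IsUnit.unit_spec t.2.1)
    · intro u; exact Subtype.ext (Units.ext (IsUnit.unit_spec u.1.isUnit))
  have hcnt := RCG.card_fiber_mul (ZMod.unitsMap hdvd) (ZMod.unitsMap_surjective hdvd) hu₀.unit
  rw [show Nat.card (ZMod d)ˣ = Nat.totient d from by
      rw [Nat.card_eq_fintype_card, ZMod.card_units_eq_totient],
    show Nat.card (ZMod (d * e))ˣ = Nat.totient (d * e) from by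
      rw [Nat.card_eq_fintype_card, ZMod.card_units_eq_totient],
    Nat.totient_mul hcop] at hcnt
  have hfiber : Nat.card {t : ZMod (d * e) // IsUnit t ∧
      ((t.val : ℕ) : ZMod d) = (t₀ : ZMod d)} = Nat.totient e := by
    rw [Nat.card_congr hequiv]
    exact Nat.eq_of_mul_eq_mul_left (Nat.totient_pos.mpr hd) hcnt
  have hfinal : Nat.card {x : Hol G // Subgroup.zpowers x = C ∧
      ∃ (a c : ℕ) (u : (ZMod e)ˣ), x = ⟨σ ^ a * τ, θ ^ c * Φ u⟩} = Nat.totient e := by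
    rw [hcardX, hfiber]
  refine ⟨?_, hfinal⟩
  have hpos : 0 < Nat.card {x : Hol G // Subgroup.zpowers x = C ∧
      ∃ (a c : ℕ) (u : (ZMod e)ˣ), x = ⟨σ ^ a * τ, θ ^ c * Φ u⟩} := by
    rw [hfinal]; exact Nat.totient_pos.mpr he
  obtain ⟨⟨x, hx1, a, c, u, rfl⟩⟩ := (Nat.card_pos_iff.mp hpos).1
  exact ⟨a, c, u, hx1⟩
end

section
/- Let G = G(d,e,k) be a group of squarefree order n = d·e and let x = [σ^a τ, θ^c φ_s] ∈ Hol(G). Then the cyclic subgroup ⟨x⟩ of Hol(G) acts transitively on G if and only if the cyclic subgroup ⟨x^d⟩ acts transitively on the subgroup ⟨σ⟩ of G. -/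
/-!
Let `N = ⟨σ⟩`, which is normal in `G`. Modulo `N`, every automorphism `θ^c φ_s` acts trivially
and `σ^a τ` is congruent to `τ`, so `x` acts on `G ⧸ N ≅ ⟨τN⟩ ≅ ℤ/d` as the translation by `τN`,
of order exactly `d` because `gcd(d, e) = 1`. Hence `⟨x⟩` moves every point into the fiber `N`,
and the elements of `⟨x⟩` mapping `N` into itself are exactly the powers of `x^d`.
-/

open Subgroup

namespace SemidirectProduct

variable {N G : Type*} [Group N] [Group G] {φ : G →* MulAut N}

instance instMulActionLeft : MulAction (N ⋊[φ] G) N where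
  smul h n := h.left * φ h.right n
  one_smul n := by simp [HSMul.hSMul, SMul.smul]
  mul_smul h₁ h₂ n := by simp [HSMul.hSMul, SMul.smul, mul_assoc]

theorem smul_def (h : N ⋊[φ] G) (n : N) : h • n = h.left * φ h.right n := rfl

end SemidirectProduct

section Fibre

variable {M X Q : Type*} [Group M] [MulAction M X] [Group Q] {x : M} {f : X → Q} {q : Q}

theorem apply_zpow_smul_of_semiconj (hf : ∀ w, f (x • w) = q * f w) (m : ℤ) (w : X) :
    f (x ^ m • w) = q ^ m * f w := by
  have hf_inv : ∀ w, f (x⁻¹ • w) = q⁻¹ * f w := fun w => by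
    rw [eq_inv_mul_iff_mul_eq, ← hf, smul_inv_smul]
  induction m using Int.induction_on generalizing w with
  | zero => simp
  | succ m ih => rw [zpow_add_one, mul_smul, ih, hf, ← mul_assoc, ← zpow_add_one]
  | pred m ih => rw [zpow_sub_one, mul_smul, ih, hf_inv, ← mul_assoc, ← zpow_sub_one]

theorem zpowers_transitive_iff_fiber_transitive (hf : ∀ w, f (x • w) = q * f w)
    (hsurj : ∀ w, f w ∈ zpowers q) :
    (∀ w y : X, ∃ h ∈ zpowers x, h • w = y) ↔
      ∀ w, f w = 1 → ∀ y, f y = 1 → ∃ h ∈ zpowers (x ^ orderOf q), h • w = y := by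
  constructor
  · intro H w hw y hy
    obtain ⟨_, ⟨m, rfl⟩, hm⟩ := H w y
    have hqm : q ^ m = 1 := by
      simpa [hw, hy, hm, eq_comm] using apply_zpow_smul_of_semiconj hf m w
    obtain ⟨m', rfl⟩ := orderOf_dvd_iff_zpow_eq_one.mpr hqm
    exact ⟨(x ^ orderOf q) ^ m', zpow_mem (mem_zpowers _) m', by rwa [← zpow_natCast, ← zpow_mul]⟩
  · intro H w y
    have toFiber : ∀ v, ∃ i : ℤ, f (x ^ i • v) = 1 := fun v => by
      obtain ⟨j, hj⟩ := hsurj v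
      exact ⟨-j, by rw [apply_zpow_smul_of_semiconj hf, ← hj, zpow_neg, inv_mul_cancel]⟩
    obtain ⟨i, hi⟩ := toFiber w
    obtain ⟨j, hj⟩ := toFiber y
    obtain ⟨h, hh, hhw⟩ := H _ hi _ hj
    have hxh : h ∈ zpowers x := zpowers_le.mpr (pow_mem (mem_zpowers x) _) hh
    refine ⟨x ^ (-j) * h * x ^ i, mul_mem (mul_mem (zpow_mem (mem_zpowers x) _) hxh)
      (zpow_mem (mem_zpowers x) _), ?_⟩
    rw [mul_smul, mul_smul, hhw, ← mul_smul, ← zpow_add, neg_add_cancel, zpow_zero, one_smul]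

end Fibre

theorem MulAut.apply_pow_apply_of_invariant {G β : Type*} [Mul G] {α : MulAut G} {f : G → β}
    (h : ∀ w, f (α w) = f w) (n : ℕ) (w : G) : f ((α ^ n) w) = f w := by
  induction n generalizing w with
  | zero => rfl
  | succ n ih => rw [pow_succ, MulAut.mul_apply, ih, h]

section Quotient

variable {G : Type*} [Group G]

theorem zpowers_normal_of_conj_mem {σ τ : G} (hσ : IsOfFinOrder σ)
    (hgen : closure {σ, τ} = ⊤) (hconj : τ * σ * τ⁻¹ ∈ zpowers σ) : (zpowers σ).Normal := by
  have := hσ.finite_zpowers.to_subtype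
  refine normalizer_eq_top_iff.mp (eq_top_iff.mpr (hgen ▸ closure_le _ |>.mpr ?_))
  refine Set.insert_subset (le_normalizer (mem_zpowers σ)) (Set.singleton_subset_iff.mpr ?_)
  refine mem_normalizer_fintype fun _ hn => ?_
  obtain ⟨t, rfl⟩ := mem_zpowers_iff.mp hn
  rw [← conj_zpow]
  exact zpow_mem hconj t

theorem orderOf_mk_of_coprime {N : Subgroup G} [N.Normal] {τ : G}
    (h : (Nat.card N).Coprime (orderOf τ)) : orderOf (τ : G ⧸ N) = orderOf τ := by
  refine Nat.dvd_antisymm (orderOf_map_dvd (QuotientGroup.mk' N) τ) ?_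
  have hmem : τ ^ orderOf (τ : G ⧸ N) ∈ N := by
    rw [← QuotientGroup.eq_one_iff, QuotientGroup.mk_pow, pow_orderOf_eq_one]
  have hone : orderOf (τ ^ orderOf (τ : G ⧸ N)) = 1 :=
    Nat.eq_one_of_dvd_coprimes h (N.orderOf_dvd_natCard hmem) (orderOf_pow_dvd _)
  exact orderOf_dvd_of_pow_eq_one (orderOf_eq_one_iff.mp hone)

variable {N : Subgroup G} [N.Normal] {σ τ : G}

theorem mk_mem_zpowers_of_closure_eq_top (hσ : σ ∈ N) (hgen : closure {σ, τ} = ⊤) (w : G) :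
    (w : G ⧸ N) ∈ zpowers (τ : G ⧸ N) := by
  have hle : (⊤ : Subgroup G).map (QuotientGroup.mk' N) ≤ zpowers (τ : G ⧸ N) := by
    rw [← hgen, MonoidHom.map_closure, closure_le]
    rintro _ ⟨v, rfl | rfl, rfl⟩
    · rw [QuotientGroup.coe_mk', (QuotientGroup.eq_one_iff _).mpr hσ]
      exact one_mem _
    · exact mem_zpowers _
  exact hle ⟨w, trivial, rfl⟩

theorem mk_apply_eq_of_closure_eq_top (hσ : σ ∈ N) (hgen : closure {σ, τ} = ⊤) (α : G →* G)
    (hασ : α σ ∈ N) (hατ : (α τ : G ⧸ N) = τ) (w : G) : (α w : G ⧸ N) = w := by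
  have hcomp : (QuotientGroup.mk' N).comp α = QuotientGroup.mk' N := by
    refine MonoidHom.eq_of_eqOn_dense hgen ?_
    rintro _ (rfl | rfl)
    · simp [(QuotientGroup.eq_one_iff _).mpr hσ, (QuotientGroup.eq_one_iff _).mpr hασ]
    · exact hατ
  exact DFunLike.congr_fun hcomp w

end Quotient

theorem transitive_iff_power_transitive_general (d e k : ℕ) (he : 0 < e)
    (hcop : Nat.Coprime d e)
    (G : Type) [Group G] (σ τ : G)
    (hσ : orderOf σ = e) (hτ : orderOf τ = d)
    (hrel : τ * σ * τ⁻¹ = σ ^ k) (hgen : Subgroup.closure {σ, τ} = ⊤)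
    (z : ℕ)
    (θ : MulAut G) (hθσ : θ σ = σ) (hθτ : θ τ = σ ^ z * τ)
    (Φ : (ZMod e)ˣ → MulAut G)
    (hΦ : ∀ u : (ZMod e)ˣ, Φ u σ = σ ^ ((u : ZMod e)).val ∧ Φ u τ = τ)
    (a c : ℕ) (u : (ZMod e)ˣ)
    (x : Hol G) (hx : x = ⟨σ ^ a * τ, θ ^ c * Φ u⟩) :
    (∀ w y : G, ∃ h ∈ Subgroup.zpowers x, h.left * h.right w = y) ↔
      (∀ w ∈ Subgroup.zpowers σ, ∀ y ∈ Subgroup.zpowers σ,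
        ∃ h ∈ Subgroup.zpowers (x ^ d), h.left * h.right w = y) := by
  have hσN : σ ∈ zpowers σ := mem_zpowers σ
  have : (zpowers σ).Normal := zpowers_normal_of_conj_mem (orderOf_pos_iff.mp (hσ ▸ he)) hgen
    (hrel ▸ pow_mem hσN k)
  have hθ : ∀ w, ((θ w : G) : G ⧸ zpowers σ) = w :=
    mk_apply_eq_of_closure_eq_top hσN hgen θ.toMonoidHom (by simp [hθσ]) <| by
      simp [hθτ, (QuotientGroup.eq_one_iff _).mpr (pow_mem hσN z)]
  have hΦu : ∀ w, ((Φ u w : G) : G ⧸ zpowers σ) = w :=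
    mk_apply_eq_of_closure_eq_top hσN hgen (Φ u).toMonoidHom
      ((hΦ u).1 ▸ pow_mem hσN _) (congrArg _ (hΦ u).2)
  have hx_mk : ∀ w, ((x • w : G) : G ⧸ zpowers σ) = τ * w := fun w => by
    rw [hx, SemidirectProduct.smul_def, MonoidHom.id_apply, QuotientGroup.mk_mul,
      MulAut.mul_apply, MulAut.apply_pow_apply_of_invariant hθ, hΦu, QuotientGroup.mk_mul,
      (QuotientGroup.eq_one_iff _).mpr (pow_mem hσN a), one_mul]
  have hord : orderOf (τ : G ⧸ zpowers σ) = d := by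
    rw [orderOf_mk_of_coprime (by rw [Nat.card_zpowers, hσ, hτ]; exact hcop.symm), hτ]
  have hfiber := zpowers_transitive_iff_fiber_transitive hx_mk
    (mk_mem_zpowers_of_closure_eq_top hσN hgen)
  simp only [hord, QuotientGroup.eq_one_iff] at hfiber
  -- `h • w` unfolds to `h.left * h.right w`
  exact hfiber

/-- **Lemma (transitivity criterion).** Let `G = G(d,e,k)` of squarefree order `n = d·e`
and let `x = [σ^a τ, θ^c φ_u] ∈ Hol(G)`. Then `⟨x⟩` acts transitively on `G` (via
`[α,ψ]·β = α·ψ(β)`) if and only if `⟨x^d⟩` acts transitively on the subgroup `⟨σ⟩`. -/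
theorem transitive_iff_power_transitive (d e k : ℕ) (hd : 0 < d) (he : 0 < e) (hk : 0 < k)
    (hcop : Nat.Coprime d e) (hord : orderOf (k : ZMod e) = d)
    (hsf : Squarefree (d * e))
    (G : Type) [Group G] (σ τ : G)
    (hσ : orderOf σ = e) (hτ : orderOf τ = d)
    (hrel : τ * σ * τ⁻¹ = σ ^ k) (hgen : Subgroup.closure {σ, τ} = ⊤)
    (z g : ℕ) (hz : z = Nat.gcd e (k - 1)) (hg : g = e / z)
    (θ : MulAut G) (hθσ : θ σ = σ) (hθτ : θ τ = σ ^ z * τ)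
    (Φ : (ZMod e)ˣ → MulAut G)
    (hΦ : ∀ u : (ZMod e)ˣ, Φ u σ = σ ^ ((u : ZMod e)).val ∧ Φ u τ = τ)
    (a c : ℕ) (u : (ZMod e)ˣ)
    (x : Hol G) (hx : x = ⟨σ ^ a * τ, θ ^ c * Φ u⟩) :
    (∀ w y : G, ∃ h ∈ Subgroup.zpowers x, h.left * h.right w = y) ↔
      (∀ w ∈ Subgroup.zpowers σ, ∀ y ∈ Subgroup.zpowers σ,
        ∃ h ∈ Subgroup.zpowers (x ^ d), h.left * h.right w = y) :=
  transitive_iff_power_transitive_general d e k he hcop G σ τ hσ hτ hrel hgen z θ hθσ hθτ Φ hΦ a c u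
    x hx
end

section
/- Let G = G(d,e,k) be a group of squarefree order n = d·e, with z = gcd(e,k−1) and g = e/z. Let x = [σ^a τ, θ^c φ_s] ∈ Hol(G), with a ∈ Z/eZ, c ∈ Z/gZ, s ∈ U(e). Then x generates a regular cyclic subgroup of Hol(G) if and only if: (i) for each prime q dividing z, s ≡ 1 (mod q) and q does not divide a; and (ii) for each prime q dividing g, either s ≡ 1 (mod q) and c ≢ 0 (mod q), or s ≡ k⁻¹ (mod q) and (s−1)a + cz ≢ 0 (mod q). -/
/-!
Write `ψ = θ^c φ_s`, so that `ψ σ = σ^s`, `ψ τ = σ^(cz) τ` and `x^m = [σ^(A m) τ^m, ψ^m]` with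
`A m = ∑_{i<m} k^i (a s^i + cz (1 + s + ⋯ + s^(i-1)))`.
Since `Hol(G)` acts faithfully on `G` and `⟨x⟩` is abelian, `⟨x⟩` is regular once
`x^m • 1 = 1 ↔ n ∣ m`, i.e. once `e ∣ A m ↔ e ∣ m` for all `d ∣ m`; as `e` is squarefree this
can be checked one prime `q ∣ e` at a time, in `𝔽_q`, where `k^d = 1`.
If `q ∣ z` then `k ≡ 1`, `z ≡ 0` and `A m = a (1 + s + ⋯ + s^(m-1))`. If `q ∣ g` then `k ≢ 1`,
so `∑_{i<m} k^i = 0` for `d ∣ m`, whence `(s - 1) A m = ((s - 1) a + cz) ∑_{i<m} (ks)^i`, and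
`(k - 1) A m = cz m` if `s = 1`.
Conversely, if `⟨x⟩` is regular then the `A m` with `d ∣ m` take every value mod `q`. When the
condition at `q` fails, these formulas give `γ A m = β (s^m - 1)` with `γ ≠ 0`, so `A m` never
takes the value `-β/γ` (or `1`, if `β = 0`).
-/

open Finset Subgroup

namespace Hol

variable {G : Type*} [Group G]

instance : MulAction (Hol G) G where
  smul h β := h.left * h.right β
  one_smul β := by simp [HSMul.hSMul]
  mul_smul h₁ h₂ β := by simp [HSMul.hSMul, mul_assoc]

theorem smul_def (h : Hol G) (β : G) : h • β = h.left * h.right β := rfl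

@[simp]
theorem smul_one_eq_left (h : Hol G) : h • (1 : G) = h.left := by simp [smul_def]

instance : FaithfulSMul (Hol G) G where
  eq_of_smul_eq_smul {h₁ h₂} H := by
    have hl : h₁.left = h₂.left := by simpa using H 1
    refine SemidirectProduct.ext hl (MulEquiv.ext fun β => ?_)
    simpa [smul_def, hl] using H β

instance [Finite G] : Finite (Hol G) := Finite.of_equiv _ SemidirectProduct.equivProd.symm

end Hol

section Regular

variable {G : Type*} [Group G] [Finite G]

theorem IsRegularHolSubgroup.exists_pow_left_eq {x : Hol G}
    (hx : IsRegularHolSubgroup G (zpowers x)) (y : G) : ∃ m : ℕ, (x ^ m).left = y := by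
  obtain ⟨h, hmem, rfl⟩ := hx.1 1 y
  obtain ⟨m, rfl⟩ := mem_powers_iff_mem_zpowers.2 hmem
  exact ⟨m, by simp⟩

theorem isRegularHolSubgroup_zpowers_of_left_pow_eq_one_iff {x : Hol G}
    (hx : ∀ m : ℕ, (x ^ m).left = 1 ↔ Nat.card G ∣ m) : IsRegularHolSubgroup G (zpowers x) := by
  set N := Nat.card G
  have hfix : ∀ m : ℕ, x ^ m • (1 : G) = 1 ↔ N ∣ m := by simpa using hx
  have hinj : Function.Injective fun i : Fin N => x ^ (i : ℕ) • (1 : G) := by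
    intro i j hij
    wlog hle : (i : ℕ) ≤ j generalizing i j
    · exact (this hij.symm (le_of_not_ge hle)).symm
    obtain ⟨r, hr⟩ := Nat.exists_eq_add_of_le hle
    have hr1 : x ^ r • (1 : G) = 1 := by
      rw [← smul_left_cancel_iff (x ^ (i : ℕ)), smul_smul, ← pow_add, ← hr]
      exact hij.symm
    have := Nat.eq_zero_of_dvd_of_lt ((hfix r).1 hr1) (by omega)
    exact Fin.ext (by omega)
  have horbit : ∀ y : G, ∃ m : ℕ, x ^ m • (1 : G) = y := fun y =>
    let ⟨i, hi⟩ := (hinj.bijective_of_nat_card_le (by simp [N])).2 y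
    ⟨i, hi⟩
  -- `x ^ N` commutes with `x` and fixes `1`, so it fixes every point; the action is faithful.
  have hxN : x ^ N = 1 := eq_of_smul_eq_smul fun y => by
    obtain ⟨m, rfl⟩ := horbit y
    rw [smul_smul, ← pow_add, add_comm, pow_add, mul_smul, (hfix N).2 dvd_rfl, one_smul]
  refine ⟨fun w y => ?_, fun h hh w hw => ?_⟩
  · obtain ⟨i, rfl⟩ := horbit w
    obtain ⟨j, rfl⟩ := horbit y
    refine ⟨x ^ j * (x ^ i)⁻¹, mul_mem (npow_mem_zpowers x j) (inv_mem (npow_mem_zpowers x i)), ?_⟩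
    rw [← Hol.smul_def, mul_smul, inv_smul_smul]
  · obtain ⟨m, rfl⟩ := mem_powers_iff_mem_zpowers.2 hh
    obtain ⟨i, rfl⟩ := horbit w
    rw [← Hol.smul_def, smul_smul, ← pow_add, add_comm, pow_add, mul_smul,
      smul_left_cancel_iff, hfix] at hw
    obtain ⟨t, rfl⟩ := hw
    simp only [pow_mul, hxN, one_pow]

end Regular

section Metacyclic

variable {G : Type*} [Group G] {σ τ : G}

theorem MulAut.pow_apply_eq_pow_pow {ψ : MulAut G} {s : ℕ} (h : ψ σ = σ ^ s) (m : ℕ) :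
    (ψ ^ m) σ = σ ^ s ^ m := by
  induction m with
  | zero => simp
  | succ m ih => rw [pow_succ, MulAut.mul_apply, h, map_pow, ih, ← pow_mul, ← pow_succ]

theorem MulAut.pow_apply_eq_pow_mul_s15 {ψ : MulAut G} {s b : ℕ} (hσ : ψ σ = σ ^ s)
    (hτ : ψ τ = σ ^ b * τ) (m : ℕ) :
    (ψ ^ m) τ = σ ^ (b * ∑ i ∈ range m, s ^ i) * τ := by
  induction m with
  | zero => simp
  | succ m ih =>
    rw [pow_succ, MulAut.mul_apply, hτ, map_mul, map_pow, MulAut.pow_apply_eq_pow_pow hσ, ih,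
      ← mul_assoc, ← pow_mul, ← pow_add, sum_range_succ]
    ring_nf

theorem pow_mul_pow_eq_of_conj {k : ℕ} (hrel : τ * σ * τ⁻¹ = σ ^ k) (i j : ℕ) :
    τ ^ j * σ ^ i = σ ^ (i * k ^ j) * τ ^ j := by
  have hconj : MulAut.conj τ σ = σ ^ k := hrel
  rw [← mul_inv_eq_iff_eq_mul, ← MulAut.conj_apply, map_pow, map_pow MulAut.conj τ j,
    MulAut.pow_apply_eq_pow_pow hconj, ← pow_mul, mul_comm]

theorem exists_pow_mul_pow_eq {k : ℕ} (hσ : IsOfFinOrder σ) (hτ : IsOfFinOrder τ)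
    (hrel : τ * σ * τ⁻¹ = σ ^ k) (hgen : closure {σ, τ} = ⊤) (w : G) :
    ∃ i j : ℕ, σ ^ i * τ ^ j = w := by
  have hw : w ∈ closure {σ, τ} := hgen ▸ mem_top w
  induction hw using closure_induction'' with
  | mem y hy =>
    rcases hy with rfl | rfl
    exacts [⟨1, 0, by simp⟩, ⟨0, 1, by simp⟩]
  | inv_mem y hy =>
    rcases hy with rfl | rfl
    · obtain ⟨i, hi⟩ := hσ.mem_powers_iff_mem_zpowers.2 (inv_mem (mem_zpowers y))
      exact ⟨i, 0, by simpa using hi⟩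
    · obtain ⟨j, hj⟩ := hτ.mem_powers_iff_mem_zpowers.2 (inv_mem (mem_zpowers y))
      exact ⟨0, j, by simpa using hj⟩
  | one => exact ⟨0, 0, by simp⟩
  | mul y y' _ _ hy hy' =>
    obtain ⟨i, j, rfl⟩ := hy
    obtain ⟨i', j', rfl⟩ := hy'
    refine ⟨i + i' * k ^ j, j + j', ?_⟩
    rw [show σ ^ i * τ ^ j * (σ ^ i' * τ ^ j') = σ ^ i * (τ ^ j * σ ^ i') * τ ^ j' by group,
      pow_mul_pow_eq_of_conj hrel, pow_add, pow_add]
    group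

theorem isComplement'_zpowers {k : ℕ} (hσ : IsOfFinOrder σ) (hτ : IsOfFinOrder τ)
    (hcop : (orderOf σ).Coprime (orderOf τ)) (hrel : τ * σ * τ⁻¹ = σ ^ k)
    (hgen : closure {σ, τ} = ⊤) : IsComplement' (zpowers σ) (zpowers τ) := by
  refine isComplement'_of_disjoint_and_mul_eq_univ
    (disjoint_of_coprime_natCard (by rwa [Nat.card_zpowers, Nat.card_zpowers]))
    (Set.eq_univ_of_forall fun w => ?_)
  obtain ⟨i, j, rfl⟩ := exists_pow_mul_pow_eq hσ hτ hrel hgen w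
  exact Set.mul_mem_mul (npow_mem_zpowers σ i) (npow_mem_zpowers τ j)

theorem pow_mul_pow_eq_pow_mul_pow_iff (h : Disjoint (zpowers σ) (zpowers τ))
    {i j i' j' : ℕ} : σ ^ i * τ ^ j = σ ^ i' * τ ^ j' ↔ σ ^ i = σ ^ i' ∧ τ ^ j = τ ^ j' := by
  refine ⟨fun hij => ?_, fun ⟨hi, hj⟩ => by rw [hi, hj]⟩
  have := mul_injective_of_disjoint h
    (a₁ := (⟨_, npow_mem_zpowers σ i⟩, ⟨_, npow_mem_zpowers τ j⟩))
    (a₂ := (⟨_, npow_mem_zpowers σ i'⟩, ⟨_, npow_mem_zpowers τ j'⟩)) hij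
  simpa using this

theorem Subgroup.IsComplement'.finite_of_isOfFinOrder (h : IsComplement' (zpowers σ) (zpowers τ))
    (hσ : IsOfFinOrder σ) (hτ : IsOfFinOrder τ) : Finite G :=
  Nat.finite_of_card_ne_zero <| by
    rw [← h.card_mul_card, Nat.card_zpowers, Nat.card_zpowers]
    exact mul_ne_zero hσ.orderOf_pos.ne' hτ.orderOf_pos.ne'

theorem MulAut.pow_mul_apply_eq {θ φ : MulAut G} {z s : ℕ} (hθσ : θ σ = σ)
    (hθτ : θ τ = σ ^ z * τ) (hφσ : φ σ = σ ^ s) (hφτ : φ τ = τ) (c : ℕ) :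
    (θ ^ c * φ) σ = σ ^ s ∧ (θ ^ c * φ) τ = σ ^ (c * z) * τ := by
  have hθσ' : θ σ = σ ^ 1 := by rw [pow_one, hθσ]
  refine ⟨?_, ?_⟩
  · rw [MulAut.mul_apply, hφσ, map_pow, MulAut.pow_apply_eq_pow_pow hθσ', one_pow, pow_one]
  · rw [MulAut.mul_apply, hφτ, MulAut.pow_apply_eq_pow_mul_s15 hθσ' hθτ]
    simp [mul_comm]

end Metacyclic

def holExponent {R : Type*} [CommSemiring R] (k s a b : R) (m : ℕ) : R :=
  ∑ i ∈ range m, k ^ i * (a * s ^ i + b * ∑ j ∈ range i, s ^ j)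

@[simp, norm_cast]
theorem Nat.cast_holExponent {R : Type*} [CommSemiring R] (k s a b m : ℕ) :
    ((holExponent k s a b m : ℕ) : R) = holExponent (k : R) s a b m := by
  simp [holExponent]

theorem holExponent_succ {R : Type*} [CommSemiring R] (k s a b : R) (m : ℕ) :
    holExponent k s a b (m + 1) =
      holExponent k s a b m + k ^ m * (a * s ^ m + b * ∑ j ∈ range m, s ^ j) :=
  sum_range_succ _ _

theorem left_pow_mk_eq {G : Type*} [Group G] {σ τ : G} {k s a b : ℕ}
    (hrel : τ * σ * τ⁻¹ = σ ^ k) {ψ : MulAut G} (hσ : ψ σ = σ ^ s) (hτ : ψ τ = σ ^ b * τ)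
    (m : ℕ) : ((⟨σ ^ a * τ, ψ⟩ : Hol G) ^ m).left = σ ^ holExponent k s a b m * τ ^ m := by
  induction m with
  | zero => simp [holExponent]
  | succ m ih =>
    rw [pow_succ]
    have hright : ((⟨σ ^ a * τ, ψ⟩ : Hol G) ^ m).right = ψ ^ m :=
      map_pow SemidirectProduct.rightHom _ m
    calc ((⟨σ ^ a * τ, ψ⟩ : Hol G) ^ m * ⟨σ ^ a * τ, ψ⟩).left
        = σ ^ holExponent k s a b m *
            (τ ^ m * σ ^ (a * s ^ m + b * ∑ j ∈ range m, s ^ j)) * τ := by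
          rw [SemidirectProduct.mul_left, ih, hright, MonoidHom.id_apply, map_mul, map_pow,
            MulAut.pow_apply_eq_pow_pow hσ, MulAut.pow_apply_eq_pow_mul_s15 hσ hτ, pow_add,
            ← pow_mul, mul_comm (s ^ m)]
          simp only [mul_assoc]
      _ = σ ^ holExponent k s a b (m + 1) * τ ^ (m + 1) := by
          rw [pow_mul_pow_eq_of_conj hrel, holExponent_succ, pow_add σ, pow_succ τ,
            mul_comm _ (k ^ m)]
          simp only [mul_assoc]

section CommRing

variable {R : Type*} [CommRing R]

theorem sub_one_mul_holExponent (k s a b : R) (m : ℕ) :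
    (s - 1) * holExponent k s a b m =
      ((s - 1) * a + b) * ∑ i ∈ range m, (k * s) ^ i - b * ∑ i ∈ range m, k ^ i := by
  rw [holExponent, mul_sum, mul_sum, mul_sum, ← sum_sub_distrib]
  refine sum_congr rfl fun i _ => ?_
  linear_combination (k ^ i * b) * geom_sum_mul s i

theorem holExponent_one_one_zero (a : R) (m : ℕ) : holExponent 1 1 a 0 m = a * m := by
  simp [holExponent, mul_comm]

theorem sub_one_mul_sum_range_mul_pow (k : R) (m : ℕ) :
    (k - 1) * ∑ i ∈ range m, (i : R) * k ^ i = m * k ^ m - k * ∑ i ∈ range m, k ^ i := by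
  induction m with
  | zero => simp
  | succ m ih =>
    rw [sum_range_succ, sum_range_succ, mul_add, ih]
    push_cast
    ring

theorem sub_one_mul_holExponent_one (k a b : R) (m : ℕ) :
    (k - 1) * holExponent k 1 a b m =
      (k - 1) * a * ∑ i ∈ range m, k ^ i + b * (m * k ^ m - k * ∑ i ∈ range m, k ^ i) := by
  rw [← sub_one_mul_sum_range_mul_pow]
  simp only [holExponent, one_pow, sum_const, card_range, nsmul_eq_mul, mul_one, mul_sum,
    ← sum_add_distrib]
  exact sum_congr rfl fun i _ => by ring

end CommRing

section Field

variable {F : Type*} [Field F]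

theorem geom_sum_eq_zero_of_pow_eq_one {k : F} (hk : k ≠ 1) {m : ℕ} (hkm : k ^ m = 1) :
    ∑ i ∈ range m, k ^ i = 0 := by
  rw [geom_sum_eq hk, hkm, sub_self, zero_div]

theorem not_forall_exists_eq_of_mul_eq_mul_pow_sub_one {P : ℕ → Prop} {A : ℕ → F} {γ β s : F}
    (hγ : γ ≠ 0) (hs : s ≠ 0) (hA : ∀ m, P m → γ * A m = β * (s ^ m - 1)) :
    ¬ ∀ v, ∃ m, P m ∧ A m = v := by
  intro hsurj
  by_cases hβ : β = 0
  · obtain ⟨m, hm, h1⟩ := hsurj 1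
    simpa [h1, hβ, hγ] using hA m hm
  · obtain ⟨m, hm, hv⟩ := hsurj (-β / γ)
    have := hA m hm
    rw [hv, mul_div_cancel₀ _ hγ] at this
    exact mul_ne_zero hβ (pow_ne_zero m hs) (by linear_combination -this)

variable {k s a b c z : F} {d m : ℕ}

theorem holExponent_eq_zero_iff_of_eq_one (hk : k = 1) (hz : z = 0) (hs : s = 1)
    (ha : a ≠ 0) :
    holExponent k s a (c * z) m = 0 ↔ (m : F) = 0 := by
  subst hk hz hs
  simp [holExponent_one_one_zero, ha]

theorem eq_one_and_ne_zero_of_forall_exists_holExponent_eq (hk : k = 1) (hz : z = 0)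
    (hs : s ≠ 0)
    (h : ∀ v, ∃ m, d ∣ m ∧ holExponent k s a (c * z) m = v) : s = 1 ∧ a ≠ 0 := by
  subst hk hz
  rw [mul_zero] at h
  have hs1 : s = 1 := by
    by_contra hs1
    refine not_forall_exists_eq_of_mul_eq_mul_pow_sub_one (sub_ne_zero.2 hs1) hs (β := a)
      (fun m _ => ?_) h
    rw [sub_one_mul_holExponent, ← geom_sum_mul, one_mul]
    ring
  subst hs1
  refine ⟨rfl, fun ha => not_forall_exists_eq_of_mul_eq_mul_pow_sub_one one_ne_zero one_ne_zero
    (β := 0) (fun m _ => ?_) h⟩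
  simp [ha, holExponent_one_one_zero]

theorem sub_one_mul_holExponent_of_pow_eq_one (hk : k ≠ 1) (hkm : k ^ m = 1) :
    (s - 1) * holExponent k s a b m = ((s - 1) * a + b) * ∑ i ∈ range m, (k * s) ^ i := by
  rw [sub_one_mul_holExponent, geom_sum_eq_zero_of_pow_eq_one hk hkm, mul_zero, sub_zero]

theorem sub_one_mul_holExponent_one_of_pow_eq_one (hk : k ≠ 1) (hkm : k ^ m = 1) :
    (k - 1) * holExponent k 1 a b m = b * m := by
  rw [sub_one_mul_holExponent_one, geom_sum_eq_zero_of_pow_eq_one hk hkm, hkm]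
  ring

theorem holExponent_eq_zero_iff_of_ne_one (hk : k ≠ 1) (hkm : k ^ m = 1) (hz : z ≠ 0)
    (hcond : (s = 1 ∧ c ≠ 0) ∨ (s * k = 1 ∧ (s - 1) * a + c * z ≠ 0)) :
    holExponent k s a (c * z) m = 0 ↔ (m : F) = 0 := by
  rcases hcond with ⟨rfl, hc⟩ | ⟨hsk, hβ⟩
  · have h := sub_one_mul_holExponent_one_of_pow_eq_one (a := a) (b := c * z) hk hkm
    rw [← mul_right_inj' (sub_ne_zero.2 hk), h, mul_zero, mul_eq_zero,
      or_iff_right (mul_ne_zero hc hz)]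
  · have hs : s ≠ 1 := by rintro rfl; exact hk (by simpa using hsk)
    have h := sub_one_mul_holExponent_of_pow_eq_one (s := s) (a := a) (b := c * z) hk hkm
    rw [mul_comm k, hsk] at h
    simp only [one_pow, sum_const, card_range, nsmul_eq_mul, mul_one] at h
    rw [← mul_right_inj' (sub_ne_zero.2 hs), h, mul_zero, mul_eq_zero, or_iff_right hβ]

theorem eq_one_or_mul_eq_one_of_forall_exists_holExponent_eq (hk : k ≠ 1) (hkd : k ^ d = 1)
    (hs : s ≠ 0)
    (h : ∀ v, ∃ m, d ∣ m ∧ holExponent k s a (c * z) m = v) :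
    (s = 1 ∧ c ≠ 0) ∨ (s * k = 1 ∧ (s - 1) * a + c * z ≠ 0) := by
  have hkm : ∀ m, d ∣ m → k ^ m = 1 := fun m ⟨t, ht⟩ => by rw [ht, pow_mul, hkd, one_pow]
  by_cases hs1 : s = 1
  · subst hs1
    refine .inl ⟨rfl, fun hc => not_forall_exists_eq_of_mul_eq_mul_pow_sub_one
      (sub_ne_zero.2 hk) one_ne_zero (β := 0) (fun m hm => ?_) h⟩
    simp [sub_one_mul_holExponent_one_of_pow_eq_one hk (hkm m hm), hc]
  have hsk : s * k = 1 := by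
    by_contra hsk
    refine not_forall_exists_eq_of_mul_eq_mul_pow_sub_one
      (mul_ne_zero (sub_ne_zero.2 hs1) (sub_ne_zero.2 (mul_comm s k ▸ hsk))) hs
      (β := (s - 1) * a + c * z) (fun m hm => ?_) h
    rw [mul_comm (s - 1), mul_assoc, sub_one_mul_holExponent_of_pow_eq_one hk (hkm m hm),
      mul_left_comm, mul_comm (k * s - 1), geom_sum_mul, mul_pow, hkm m hm, one_mul]
  refine .inr ⟨hsk, fun hβ => not_forall_exists_eq_of_mul_eq_mul_pow_sub_one
    (sub_ne_zero.2 hs1) hs (β := 0) (fun m hm => ?_) h⟩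
  rw [sub_one_mul_holExponent_of_pow_eq_one hk (hkm m hm), hβ, zero_mul, zero_mul]

end Field

section Arithmetic

theorem Squarefree.dvd_iff_forall_prime_dvd {n a : ℕ} (hn : Squarefree n) :
    n ∣ a ↔ ∀ p, p.Prime → p ∣ n → p ∣ a := by
  refine ⟨fun h p _ hp => hp.trans h, fun h => ?_⟩
  rw [← Nat.prod_primeFactors_of_squarefree hn]
  exact Finset.prod_primes_dvd a (fun p hp => (Nat.prime_of_mem_primeFactors hp).prime)
    (fun p hp => h p (Nat.prime_of_mem_primeFactors hp) (Nat.dvd_of_mem_primeFactors hp))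

variable {q e k : ℕ}

theorem ZMod.natCast_eq_one_iff_dvd_gcd_sub_one (hk : 0 < k) (hq : q ∣ e) :
    (k : ZMod q) = 1 ↔ q ∣ Nat.gcd e (k - 1) := by
  rw [Nat.dvd_gcd_iff, and_iff_right hq, ← Nat.cast_one, ZMod.natCast_eq_natCast_iff,
    Nat.ModEq.comm, Nat.modEq_iff_dvd' hk]

theorem ZMod.natCast_eq_one_and_gcd_eq_zero (hk : 0 < k) (hq : q ∣ Nat.gcd e (k - 1)) :
    (k : ZMod q) = 1 ∧ (Nat.gcd e (k - 1) : ZMod q) = 0 :=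
  ⟨(natCast_eq_one_iff_dvd_gcd_sub_one hk (hq.trans (Nat.gcd_dvd_left _ _))).2 hq,
    (natCast_eq_zero_iff _ _).2 hq⟩

theorem ZMod.natCast_ne_one_and_gcd_ne_zero (hk : 0 < k) (he : Squarefree e) (hq : q.Prime)
    (hqg : q ∣ e / Nat.gcd e (k - 1)) :
    (k : ZMod q) ≠ 1 ∧ (Nat.gcd e (k - 1) : ZMod q) ≠ 0 := by
  have hze := Nat.gcd_dvd_left e (k - 1)
  have hqz : ¬ q ∣ Nat.gcd e (k - 1) := fun hqz =>
    hq.ne_one <| Nat.isUnit_iff.1 <| he q <| Nat.mul_div_cancel' hze ▸ mul_dvd_mul hqz hqg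
  exact ⟨mt (natCast_eq_one_iff_dvd_gcd_sub_one hk (hqg.trans (Nat.div_dvd_of_dvd hze))).1 hqz,
    mt (natCast_eq_zero_iff _ _).1 hqz⟩

theorem ZMod.natCast_pow_eq_one_of_dvd {d : ℕ} (hq : q ∣ e) (h : (k : ZMod e) ^ d = 1) :
    (k : ZMod q) ^ d = 1 := by
  have h' := congrArg (castHom hq (ZMod q)) h
  rwa [map_pow, map_natCast, map_one] at h'

end Arithmetic

section LocalConditions

variable {q e k d z a c s : ℕ}

theorem conditions_of_forall_exists_holExponent_modEq (hk : 0 < k) (he : Squarefree e)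
    (hz : z = Nat.gcd e (k - 1)) (hkd : (k : ZMod e) ^ d = 1) (hq : q.Prime) (hqe : q ∣ e)
    (hs : IsUnit (s : ZMod e))
    (h : ∀ v : ℕ, ∃ m, d ∣ m ∧ holExponent k s a (c * z) m ≡ v [MOD e]) :
    (q ∣ z → (s : ZMod q) = 1 ∧ ¬ q ∣ a) ∧
      (q ∣ e / z → ((s : ZMod q) = 1 ∧ (c : ZMod q) ≠ 0) ∨
        ((s : ZMod q) * k = 1 ∧ ((s : ZMod q) - 1) * a + c * z ≠ 0)) := by
  subst hz
  have := Fact.mk hq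
  have hs0 : (s : ZMod q) ≠ 0 := by simpa using (hs.map (ZMod.castHom hqe (ZMod q))).ne_zero
  have hsurj : ∀ v : ZMod q,
      ∃ m, d ∣ m ∧ holExponent (k : ZMod q) s a (c * Nat.gcd e (k - 1)) m = v := fun v => by
    obtain ⟨m, hdm, hm⟩ := h v.val
    refine ⟨m, hdm, ?_⟩
    have hmq := (ZMod.natCast_eq_natCast_iff _ _ _).2 (hm.of_dvd hqe)
    rwa [ZMod.natCast_zmod_val, Nat.cast_holExponent, Nat.cast_mul] at hmq
  refine ⟨fun hqz => ?_, fun hqg => ?_⟩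
  · obtain ⟨hk1, hz0⟩ := ZMod.natCast_eq_one_and_gcd_eq_zero hk hqz
    obtain ⟨hs1, ha⟩ := eq_one_and_ne_zero_of_forall_exists_holExponent_eq hk1 hz0 hs0 hsurj
    exact ⟨hs1, mt (ZMod.natCast_eq_zero_iff a q).2 ha⟩
  · exact eq_one_or_mul_eq_one_of_forall_exists_holExponent_eq
      (ZMod.natCast_ne_one_and_gcd_ne_zero hk he hq hqg).1
      (ZMod.natCast_pow_eq_one_of_dvd hqe hkd) hs0 hsurj

theorem prime_dvd_holExponent_iff_of_conditions (hk : 0 < k) (he : Squarefree e)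
    (hz : z = Nat.gcd e (k - 1)) (hkd : (k : ZMod e) ^ d = 1) (hq : q.Prime) (hqe : q ∣ e)
    (hcond : (q ∣ z → (s : ZMod q) = 1 ∧ ¬ q ∣ a) ∧
      (q ∣ e / z → ((s : ZMod q) = 1 ∧ (c : ZMod q) ≠ 0) ∨
        ((s : ZMod q) * k = 1 ∧ ((s : ZMod q) - 1) * a + c * z ≠ 0)))
    {m : ℕ} (hdm : d ∣ m) : q ∣ holExponent k s a (c * z) m ↔ q ∣ m := by
  subst hz
  have := Fact.mk hq
  rw [← ZMod.natCast_eq_zero_iff, ← ZMod.natCast_eq_zero_iff, Nat.cast_holExponent, Nat.cast_mul]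
  rcases hq.dvd_mul.1 ((Nat.mul_div_cancel' (Nat.gcd_dvd_left e (k - 1))).symm ▸ hqe)
    with hqz | hqg
  · obtain ⟨hk1, hz0⟩ := ZMod.natCast_eq_one_and_gcd_eq_zero hk hqz
    obtain ⟨hs1, hqa⟩ := hcond.1 hqz
    exact holExponent_eq_zero_iff_of_eq_one hk1 hz0 hs1 (mt (ZMod.natCast_eq_zero_iff a q).1 hqa)
  · obtain ⟨hk1, hz0⟩ := ZMod.natCast_ne_one_and_gcd_ne_zero hk he hq hqg
    obtain ⟨t, rfl⟩ := hdm
    refine holExponent_eq_zero_iff_of_ne_one hk1 ?_ hz0 (hcond.2 hqg)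
    rw [pow_mul, ZMod.natCast_pow_eq_one_of_dvd hqe hkd, one_pow]

end LocalConditions

section Criterion

variable {G : Type*} [Group G] [Finite G] {σ τ : G} {x : Hol G} {A : ℕ → ℕ} {d e : ℕ}

theorem IsRegularHolSubgroup.exists_dvd_and_modEq (hreg : IsRegularHolSubgroup G (zpowers x))
    (hcompl : IsComplement' (zpowers σ) (zpowers τ)) (hσ : orderOf σ = e) (hτ : orderOf τ = d)
    (hleft : ∀ m, (x ^ m).left = σ ^ A m * τ ^ m) (v : ℕ) : ∃ m, d ∣ m ∧ A m ≡ v [MOD e] := by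
  obtain ⟨m, hm⟩ := hreg.exists_pow_left_eq (σ ^ v)
  rw [hleft, ← mul_one (σ ^ v), ← pow_zero τ, pow_mul_pow_eq_pow_mul_pow_iff hcompl.disjoint,
    pow_zero, pow_eq_pow_iff_modEq, hσ, ← orderOf_dvd_iff_pow_eq_one, hτ] at hm
  exact ⟨m, hm.2, hm.1⟩

theorem isRegularHolSubgroup_zpowers_of_forall_prime_dvd
    (hcompl : IsComplement' (zpowers σ) (zpowers τ)) (hσ : orderOf σ = e) (hτ : orderOf τ = d)
    (hcop : d.Coprime e) (he : Squarefree e) (hleft : ∀ m, (x ^ m).left = σ ^ A m * τ ^ m)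
    (hA : ∀ q, q.Prime → q ∣ e → ∀ m, d ∣ m → (q ∣ A m ↔ q ∣ m)) :
    IsRegularHolSubgroup G (zpowers x) := by
  have hlocal : ∀ m, d ∣ m → (e ∣ A m ↔ e ∣ m) := fun m hdm => by
    rw [he.dvd_iff_forall_prime_dvd, he.dvd_iff_forall_prime_dvd]
    exact forall₂_congr fun q hq => forall_congr' fun hqe => hA q hq hqe m hdm
  refine isRegularHolSubgroup_zpowers_of_left_pow_eq_one_iff fun m => ?_
  have hone := pow_mul_pow_eq_pow_mul_pow_iff hcompl.disjoint (i := A m) (j := m) (i' := 0)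
    (j' := 0)
  rw [pow_zero, pow_zero, mul_one] at hone
  rw [hleft, hone, ← hcompl.card_mul_card, Nat.card_zpowers, Nat.card_zpowers,
    ← orderOf_dvd_iff_pow_eq_one, ← orderOf_dvd_iff_pow_eq_one, hσ, hτ]
  exact ⟨fun ⟨he, hd⟩ => hcop.symm.mul_dvd_of_dvd_of_dvd ((hlocal m hd).1 he) hd,
    fun h => ⟨(hlocal m (dvd_of_mul_left_dvd h)).2 (dvd_of_mul_right_dvd h),
      dvd_of_mul_left_dvd h⟩⟩

end Criterion

/-- **Lemma (regularity criterion).** Let `G = G(d,e,k)` of squarefree order `n = d·e`,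
with `z = gcd(e,k-1)`, `g = e/z`, and let `x = [σ^a τ, θ^c φ_u] ∈ Hol(G)` (where
`s = u.val` is the representative of `u ∈ U(e)`). Then `x` generates a regular cyclic
subgroup of `Hol(G)` iff:
(i) for each prime `q ∣ z`, `s ≡ 1 (mod q)` and `q ∤ a`; and
(ii) for each prime `q ∣ g`, either `s ≡ 1 (mod q)` and `c ≢ 0 (mod q)`, or
`s·k ≡ 1 (mod q)` and `(s-1)a + cz ≢ 0 (mod q)`. -/
theorem regular_generator_criterion (d e k : ℕ) (hd : 0 < d) (he : 0 < e) (hk : 0 < k)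
    (hcop : Nat.Coprime d e) (hord : orderOf (k : ZMod e) = d)
    (hsf : Squarefree (d * e))
    (G : Type) [Group G] (σ τ : G)
    (hσ : orderOf σ = e) (hτ : orderOf τ = d)
    (hrel : τ * σ * τ⁻¹ = σ ^ k) (hgen : Subgroup.closure {σ, τ} = ⊤)
    (z g : ℕ) (hz : z = Nat.gcd e (k - 1)) (hg : g = e / z)
    (θ : MulAut G) (hθσ : θ σ = σ) (hθτ : θ τ = σ ^ z * τ)
    (Φ : (ZMod e)ˣ → MulAut G)
    (hΦ : ∀ u : (ZMod e)ˣ, Φ u σ = σ ^ ((u : ZMod e)).val ∧ Φ u τ = τ)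
    (a c : ℕ) (u : (ZMod e)ˣ) (s : ℕ) (hs : s = ((u : ZMod e)).val)
    (x : Hol G) (hx : x = ⟨σ ^ a * τ, θ ^ c * Φ u⟩) :
    IsRegularHolSubgroup G (Subgroup.zpowers x) ↔
      ((∀ q : ℕ, q.Prime → q ∣ z → (s : ZMod q) = 1 ∧ ¬ (q ∣ a)) ∧
       (∀ q : ℕ, q.Prime → q ∣ g →
          ((s : ZMod q) = 1 ∧ (c : ZMod q) ≠ 0) ∨
          ((s : ZMod q) * (k : ZMod q) = 1 ∧
            ((s : ZMod q) - 1) * (a : ZMod q) + (c : ZMod q) * (z : ZMod q) ≠ 0))) := by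
  have : NeZero e := ⟨he.ne'⟩
  subst hg hs hx
  have hσfin : IsOfFinOrder σ := orderOf_pos_iff.1 (hσ ▸ he)
  have hτfin : IsOfFinOrder τ := orderOf_pos_iff.1 (hτ ▸ hd)
  have hcompl := isComplement'_zpowers hσfin hτfin (hσ ▸ hτ ▸ hcop.symm) hrel hgen
  have : Finite G := hcompl.finite_of_isOfFinOrder hσfin hτfin
  obtain ⟨hψσ, hψτ⟩ := MulAut.pow_mul_apply_eq hθσ hθτ (hΦ u).1 (hΦ u).2 c
  have hleft := left_pow_mk_eq (a := a) hrel hψσ hψτ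
  have hsfe : Squarefree e := hsf.squarefree_of_dvd (dvd_mul_left e d)
  have hkd : (k : ZMod e) ^ d = 1 := hord ▸ pow_orderOf_eq_one _
  have hze : z ∣ e := hz ▸ Nat.gcd_dvd_left e (k - 1)
  constructor
  · intro hreg
    have hcond := fun q (hq : q.Prime) (hqe : q ∣ e) =>
      conditions_of_forall_exists_holExponent_modEq hk hsfe hz hkd hq hqe
        ((ZMod.natCast_zmod_val (u : ZMod e)).symm ▸ u.isUnit)
        (hreg.exists_dvd_and_modEq hcompl hσ hτ hleft)
    exact ⟨fun q hq hqz => (hcond q hq (hqz.trans hze)).1 hqz,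
      fun q hq hqg => (hcond q hq (hqg.trans (Nat.div_dvd_of_dvd hze))).2 hqg⟩
  · rintro ⟨hcz, hcg⟩
    exact isRegularHolSubgroup_zpowers_of_forall_prime_dvd hcompl hσ hτ hcop hsfe hleft
      fun q hq hqe m hdm => prime_dvd_holExponent_iff_of_conditions hk hsfe hz hkd hq hqe
        ⟨hcz q hq, hcg q hq⟩ hdm
end
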